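/- arXiv:2211.10958 — 9 statements merged into one kernel-verified Lean document; each statement's English description precedes it below -/
import Mathlib

section
/- The number of noncommutative crossing partitions of [n] is n!. -/
/-- A noncommutative crossing partition of `[n] = {1,...,n}`: a sequence of blocks such that
every integer in `[n]` appears exactly once, each block is nonempty and strictly increasing,
and `max(π_i) > min(π_{i+1})` for consecutive blocks. -/
def IsNCCP (n : ℕ) (π : List (List ℕ)) : Prop :=
  π.flatten.Perm (List.range' 1 n) ∧
  (∀ b ∈ π, b ≠ [] ∧ b.Pairwise (· < ·)) ∧
  π.Chain' (fun b b' => ∃ x ∈ b, ∃ y ∈ b', y < x)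

/-!
Concatenating the blocks maps noncommutative crossing partitions of `[n]` bijectively onto the
arrangements of `1, …, n`; the inverse cuts a word into its maximal increasing runs
(`List.splitBy (· < ·)`). For sorted blocks, `max πᵢ > min πᵢ₊₁` says that the last letter of `πᵢ`
exceeds the first letter of `πᵢ₊₁`, which, as all letters are distinct, is exactly the
maximality of the runs.
-/

open List

section

variable {α : Type*} [LinearOrder α]

theorem List.exists_mem_lt_iff_head_lt_getLast {b b' : List α} (hb : b.Pairwise (· < ·))
    (hb' : b'.Pairwise (· < ·)) (hne : b ≠ []) (hne' : b' ≠ []) :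
    (∃ x ∈ b, ∃ y ∈ b', y < x) ↔ b'.head hne' < b.getLast hne := by
  refine ⟨fun ⟨x, hx, y, hy, hyx⟩ => ?_, fun h => ⟨_, getLast_mem hne, _, head_mem hne', h⟩⟩
  calc b'.head hne' ≤ y := (hb'.imp le_of_lt).rel_head hy
    _ < x := hyx
    _ ≤ b.getLast hne := (hb.imp le_of_lt).rel_getLast hx

theorem List.isChain_head_le_getLast_iff {l : List (List α)} (hl : l.flatten.Nodup)
    (hblocks : ∀ b ∈ l, b ≠ [] ∧ b.Pairwise (· < ·)) :
    l.IsChain (fun b b' => ∃ hb hb', b'.head hb' ≤ b.getLast hb) ↔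
      l.IsChain (fun b b' => ∃ x ∈ b, ∃ y ∈ b', y < x) := by
  simp only [isChain_iff_forall_rel_of_append_cons_cons]
  refine forall₄_congr fun b b' l₁ l₂ => imp_congr_right fun hsplit => ?_
  obtain ⟨hb, hb_sorted⟩ := hblocks b (by simp [hsplit])
  obtain ⟨hb', hb'_sorted⟩ := hblocks b' (by simp [hsplit])
  have hne : b'.head hb' ≠ b.getLast hb := by
    rw [hsplit, flatten_append, flatten_cons, flatten_cons] at hl
    exact (nodup_append.1 (nodup_append.1 hl).2.1).2.2 _ (getLast_mem hb) _
      (mem_append_left _ (head_mem hb')) |>.symm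
  rw [exists_mem_lt_iff_head_lt_getLast hb_sorted hb'_sorted hb hb', lt_iff_le_and_ne]
  simp [hb, hb', hne]

theorem List.splitBy_lt_flatten_eq_iff {l : List (List α)} (hl : l.flatten.Nodup) :
    l.flatten.splitBy (· < ·) = l ↔
      (∀ b ∈ l, b ≠ [] ∧ b.Pairwise (· < ·)) ∧
        l.IsChain (fun b b' => ∃ x ∈ b, ∃ y ∈ b', y < x) := by
  simp only [splitBy_eq_iff, decide_eq_true_eq, decide_eq_false_iff_not, not_lt, true_and,
    isChain_iff_pairwise]
  have hblocks : ([] ∉ l ∧ ∀ b ∈ l, b.Pairwise (· < ·)) ↔ ∀ b ∈ l, b ≠ [] ∧ b.Pairwise (· < ·) :=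
    ⟨fun ⟨hnil, hsorted⟩ b hb => ⟨fun h => hnil (h ▸ hb), hsorted b hb⟩,
      fun h => ⟨fun hnil => (h _ hnil).1 rfl, fun b hb => (h b hb).2⟩⟩
  rw [← and_assoc, hblocks]
  exact and_congr_right (isChain_head_le_getLast_iff hl)

end

theorem List.ncard_setOf_perm {α : Type*} [DecidableEq α] {l : List α} (hl : l.Nodup) :
    {w | w ~ l}.ncard = l.length.factorial := by
  have hset : {w | w ~ l} = (l.permutations.toFinset : Set (List α)) := by
    ext w; simp [mem_permutations]
  rw [hset, Set.ncard_coe_finset, toFinset_card_of_nodup (nodup_permutations _ hl),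
    length_permutations]

theorem isNCCP_iff_splitBy (n : ℕ) (π : List (List ℕ)) :
    IsNCCP n π ↔ π.flatten ~ range' 1 n ∧ π.flatten.splitBy (· < ·) = π :=
  and_congr_right fun hperm => (splitBy_lt_flatten_eq_iff (hperm.nodup_iff.2 (nodup_range' ..))).symm

/-- The number of noncommutative crossing partitions of `[n]` is `n!`. -/
theorem nccp_card (n : ℕ) :
    {π : List (List ℕ) | IsNCCP n π}.ncard = Nat.factorial n := by
  have hset : {π | IsNCCP n π} = splitBy (· < ·) '' {w | w ~ range' 1 n} := by
    ext π
    simp only [Set.mem_ofPred_eq, isNCCP_iff_splitBy, Set.mem_image]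
    constructor
    · rintro ⟨hperm, hsplit⟩
      exact ⟨_, hperm, hsplit⟩
    · rintro ⟨w, hw, rfl⟩
      simpa only [flatten_splitBy, and_true] using hw
  rw [hset, Set.ncard_image_of_injective _ (Function.LeftInverse.injective (flatten_splitBy _)),
    ncard_setOf_perm (nodup_range' ..), length_range']
end

section
/- The number of 312-avoiding noncommutative crossing partitions of [n] equals the n-th Catalan number. -/
/-- A word avoids the pattern 312: no positions `i < j < k` with `w_j < w_k < w_i`. -/
def Avoids312 (w : List ℕ) : Prop :=
  ¬ ∃ i j k : ℕ, i < j ∧ j < k ∧ k < w.length ∧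
      w.getD j 0 < w.getD k 0 ∧ w.getD k 0 < w.getD i 0


/-!
A noncommutative crossing partition is the same thing as the decomposition of its concatenation
into maximal ascending runs, so `π ↦ π.flatten` is a bijection from noncommutative crossing
partitions of `[n]` onto permutations of `[n]`, with inverse `List.splitBy (· < ·)`.

Split a permutation `w` of an interval around its minimum `a`, as `w = A ++ a :: B`. Then `w`
avoids 312 iff `A` and `B` do and every entry of `A` is below every entry of `B`; so `A` and `B`
are permutations of two consecutive subintervals, and the numbers of 312-avoiding permutations
satisfy the Catalan recurrence.
-/

open List

theorem List.IsChain.and {α : Type*} {R S : α → α → Prop} {l : List α} (hR : l.IsChain R)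
    (hS : l.IsChain S) : l.IsChain fun a b => R a b ∧ S a b := by
  induction hR with
  | nil => exact .nil
  | singleton a => exact .singleton a
  | cons_cons hab _ ih => exact .cons_cons ⟨hab, hS.rel⟩ (ih hS.tail)

def ascendingRuns (w : List ℕ) : List (List ℕ) :=
  w.splitBy fun x y => decide (x < y)

theorem flatten_ascendingRuns (w : List ℕ) : (ascendingRuns w).flatten = w :=
  flatten_splitBy _ w

theorem isNCCP_iff {n : ℕ} {π : List (List ℕ)} :
    IsNCCP n π ↔ π.flatten ~ range' 1 n ∧ ascendingRuns π.flatten = π := by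
  have hrun : ∀ b : List ℕ,
      (b.IsChain fun x y => decide (x < y) = true) ↔ b.Pairwise (· < ·) :=
    fun b => by simpa using isChain_iff_pairwise
  unfold IsNCCP ascendingRuns
  rw [splitBy_eq_iff]
  refine and_congr_right fun hperm =>
    ⟨fun ⟨hblocks, hchain⟩ => ?_, fun ⟨_, hnil, hsorted, hchain⟩ => ?_⟩
  · refine ⟨rfl, fun h => (hblocks [] h).1 rfl, fun b hb => (hrun b).mpr (hblocks b hb).2, ?_⟩
    refine hchain.imp_of_mem_imp fun b b' hb hb' ⟨x, hx, y, hy, hyx⟩ =>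
      ⟨ne_nil_of_mem hx, ne_nil_of_mem hy, decide_eq_false ?_⟩
    have hxlast := ((hblocks b hb).2.imp le_of_lt).rel_getLast hx
    have hheady := ((hblocks b' hb').2.imp le_of_lt).rel_head hy
    omega
  · refine ⟨fun b hb => ⟨fun h => hnil (h ▸ hb), (hrun b).mp (hsorted b hb)⟩, ?_⟩
    -- consecutive runs of a word without repetitions are disjoint, so "≤" across them is "<"
    have hdisj := (nodup_flatten.mp (hperm.nodup_iff.mpr nodup_range')).2.isChain
    refine (hchain.and hdisj).imp fun b b' ⟨⟨hb, hb', hlast⟩, hd⟩ => ?_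
    have hne : b'.head hb' ≠ b.getLast hb := fun h => hd (getLast_mem hb) (h ▸ head_mem hb')
    exact ⟨_, getLast_mem hb, _, head_mem hb', by simp at hlast; omega⟩

theorem avoids312_iff_sublist {w : List ℕ} :
    Avoids312 w ↔ ∀ x y z, [x, y, z] <+ w → ¬ (y < z ∧ z < x) := by
  constructor
  · rintro h x y z hs ⟨hyz, hzx⟩
    obtain ⟨is, hxyz, hinc⟩ := sublist_eq_map_getElem hs
    rcases is with _ | ⟨i, _ | ⟨j, _ | ⟨k, _ | _⟩⟩⟩ <;> simp at hxyz
    obtain ⟨rfl, rfl, rfl⟩ := hxyz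
    simp only [pairwise_cons, mem_cons, forall_eq_or_imp] at hinc
    refine h ⟨i, j, k, hinc.1.1, hinc.2.1.1, k.2, ?_⟩
    simpa [getD_eq_getElem] using ⟨hyz, hzx⟩
  · rintro h ⟨i, j, k, hij, hjk, hk, hyz, hzx⟩
    refine h _ _ _ ?_ ⟨hyz, hzx⟩
    have := map_getElem_sublist (l := w) (is := [⟨i, by omega⟩, ⟨j, by omega⟩, ⟨k, hk⟩])
      (by simp [Fin.mk_lt_mk]; omega)
    simpa [getD_eq_getElem, show i < w.length by omega, show j < w.length by omega, hk] using this

theorem avoids312_append_cons_iff {A B : List ℕ} {a : ℕ} (hA : ∀ x ∈ A, a < x)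
    (hB : ∀ y ∈ B, a < y) :
    Avoids312 (A ++ a :: B) ↔
      Avoids312 A ∧ Avoids312 B ∧ ∀ x ∈ A, ∀ y ∈ B, x ≤ y := by
  simp only [avoids312_iff_sublist]
  constructor
  · intro h
    refine ⟨fun x y z hs => h x y z (hs.trans (sublist_append_left _ _)),
      fun x y z hs => h x y z ((hs.cons a).trans (sublist_append_right _ _)), fun x hx y hy => ?_⟩
    have hs : [x, a, y] <+ A ++ a :: B :=
      (singleton_sublist.mpr hx).append ((singleton_sublist.mpr hy).cons_cons a)
    have := h x a y hs
    have := hB y hy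
    omega
  · rintro ⟨hAv, hBv, hAB⟩ x y z hs ⟨hyz, hzx⟩
    have hge : ∀ v ∈ A ++ a :: B, a ≤ v := by
      simp only [mem_append, mem_cons]
      rintro v (hv | rfl | hv)
      exacts [(hA v hv).le, le_rfl, (hB v hv).le]
    have hya : a ≤ y := hge y (hs.subset (by simp))
    have hstraddle : x ∈ A → z ∈ a :: B → False := by
      rintro hx (_ | ⟨_, hz⟩)
      · omega
      · exact absurd (hAB x hx z hz) (by omega)
    obtain ⟨l₁, l₂, hl, h₁, h₂⟩ := sublist_append_iff.mp hs
    rcases l₁ with _ | ⟨x', _ | ⟨y', _ | ⟨z', _ | _⟩⟩⟩ <;>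
      simp only [nil_append, cons_append, cons.injEq, reduceCtorEq, and_false] at hl
    · subst hl
      rcases sublist_cons_iff.mp h₂ with h₂ | ⟨_, ⟨rfl, rfl⟩, h₂⟩
      · exact hBv x y z h₂ ⟨hyz, hzx⟩
      · have := hB z (h₂.subset (by simp))
        omega
    · obtain ⟨rfl, rfl⟩ := hl
      exact hstraddle (h₁.subset (by simp)) (h₂.subset (by simp))
    · obtain ⟨rfl, rfl, rfl⟩ := hl
      exact hstraddle (h₁.subset (by simp)) (h₂.subset (by simp))
    · obtain ⟨rfl, rfl, rfl, rfl⟩ := hl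
      exact hAv x y z h₁ ⟨hyz, hzx⟩

theorem List.Nodup.length_le_of_bounds {L : List ℕ} {s m : ℕ} (hnd : L.Nodup)
    (h : ∀ x ∈ L, s ≤ x ∧ x < s + m) : L.length ≤ m := by
  simpa using (hnd.subperm fun x hx => mem_range'_1.mpr (h x hx)).length_le

theorem List.Nodup.perm_range'_of_bounds {L : List ℕ} {s : ℕ} (hnd : L.Nodup)
    (h : ∀ x ∈ L, s ≤ x ∧ x < s + L.length) : L ~ range' s L.length :=
  (hnd.subperm fun x hx => mem_range'_1.mpr (h x hx)).perm_of_length_le (by simp)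

theorem perm_range'_of_append {A B : List ℕ} {s n : ℕ} (h : A ++ B ~ range' s n)
    (hAB : ∀ x ∈ A, ∀ y ∈ B, x ≤ y) :
    A ~ range' s A.length ∧ B ~ range' (s + A.length) B.length := by
  obtain ⟨hndA, hndB, hne⟩ := nodup_append.mp (h.nodup_iff.mpr nodup_range')
  have hmem : ∀ x ∈ A ++ B, s ≤ x ∧ x < s + n := fun x hx => mem_range'_1.mp (h.subset hx)
  have hlen : A.length + B.length = n := by simpa using h.length_eq
  have hlt : ∀ x ∈ A, ∀ y ∈ B, x < y := fun x hx y hy =>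
    lt_of_le_of_ne (hAB x hx y hy) (hne x hx y hy)
  refine ⟨hndA.perm_range'_of_bounds fun x hx => ?_, hndB.perm_range'_of_bounds fun y hy => ?_⟩
  · have hx' := hmem x (mem_append_left _ hx)
    have := hndB.length_le_of_bounds (s := x + 1) (m := s + n - (x + 1)) fun y hy =>
      have := hmem y (mem_append_right _ hy); ⟨hlt x hx y hy, by omega⟩
    omega
  · have hy' := hmem y (mem_append_right _ hy)
    have := hndA.length_le_of_bounds (s := s) (m := y - s) fun x hx =>
      have := hmem x (mem_append_left _ hx); ⟨this.1, by have := hlt x hx y hy; omega⟩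
    omega

open scoped Classical in
noncomputable def permsAvoiding312 (a n : ℕ) : Finset (List ℕ) :=
  {w ∈ (range' a n).permutations.toFinset | Avoids312 w}

section permsAvoiding312

variable {a n : ℕ} {w : List ℕ}

theorem mem_permsAvoiding312 : w ∈ permsAvoiding312 a n ↔ w ~ range' a n ∧ Avoids312 w := by
  simp [permsAvoiding312, mem_permutations]

theorem length_of_mem_permsAvoiding312 (hw : w ∈ permsAvoiding312 a n) : w.length = n := by
  simpa using (mem_permsAvoiding312.mp hw).1.length_eq

theorem bounds_of_mem_permsAvoiding312 (hw : w ∈ permsAvoiding312 a n) :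
    ∀ x ∈ w, a ≤ x ∧ x < a + n :=
  fun _ hx => mem_range'_1.mp ((mem_permsAvoiding312.mp hw).1.subset hx)

theorem permsAvoiding312_zero (a : ℕ) : permsAvoiding312 a 0 = {[]} := by
  ext w
  simp only [mem_permsAvoiding312, range'_zero, perm_nil, Finset.mem_singleton,
    and_iff_left_iff_imp]
  rintro rfl
  simp [avoids312_iff_sublist]

theorem append_cons_mem_permsAvoiding312 {i j : ℕ} {A B : List ℕ}
    (hA : A ∈ permsAvoiding312 (a + 1) i) (hB : B ∈ permsAvoiding312 (a + 1 + i) j) :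
    A ++ a :: B ∈ permsAvoiding312 a (i + j + 1) := by
  have hAmem := bounds_of_mem_permsAvoiding312 hA
  have hBmem := bounds_of_mem_permsAvoiding312 hB
  rw [mem_permsAvoiding312] at hA hB ⊢
  refine ⟨perm_middle.trans ?_, ?_⟩
  · rw [range'_succ, ← range'_append_1]
    exact (hA.1.append hB.1).cons a
  · refine (avoids312_append_cons_iff (fun x hx => (hAmem x hx).1)
      (fun y hy => by have := hBmem y hy; omega)).mpr ⟨hA.2, hB.2, fun x hx y hy => ?_⟩
    have := hAmem x hx
    have := hBmem y hy
    omega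

theorem exists_append_cons_of_mem_permsAvoiding312 (hw : w ∈ permsAvoiding312 a (n + 1)) :
    ∃ A B, w = A ++ a :: B ∧ A.length + B.length = n ∧
      A ∈ permsAvoiding312 (a + 1) A.length ∧
      B ∈ permsAvoiding312 (a + 1 + A.length) B.length := by
  rw [mem_permsAvoiding312] at hw
  obtain ⟨A, B, rfl⟩ :=
    append_of_mem (hw.1.symm.subset (mem_range'_1.mpr ⟨le_rfl, by omega⟩))
  have hAB : A ++ B ~ range' (a + 1) n := (perm_middle.symm.trans hw.1).cons_inv
  have hgt : ∀ x ∈ A ++ B, a < x := fun x hx => (mem_range'_1.mp (hAB.subset hx)).1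
  obtain ⟨hAv, hBv, hle⟩ := (avoids312_append_cons_iff
    (fun x hx => hgt x (mem_append_left _ hx)) (fun y hy => hgt y (mem_append_right _ hy))).mp hw.2
  obtain ⟨hAp, hBp⟩ := perm_range'_of_append hAB hle
  exact ⟨A, B, rfl, by simpa using hAB.length_eq, mem_permsAvoiding312.mpr ⟨hAp, hAv⟩,
    mem_permsAvoiding312.mpr ⟨hBp, hBv⟩⟩

open Finset in
theorem card_permsAvoiding312_succ (a n : ℕ) :
    #(permsAvoiding312 a (n + 1)) = ∑ ij ∈ antidiagonal n,
      #(permsAvoiding312 (a + 1) ij.1) * #(permsAvoiding312 (a + 1 + ij.1) ij.2) := by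
  simp_rw [← card_product]
  rw [← card_sigma]
  symm
  refine card_nbij (fun p => p.2.1 ++ a :: p.2.2) ?_ ?_ ?_
  · rintro ⟨⟨i, j⟩, A, B⟩ hp
    simp only [coe_sigma, Set.mem_sigma_iff, mem_coe, HasAntidiagonal.mem_antidiagonal,
      Finset.mem_product] at hp
    rw [← hp.1]
    exact append_cons_mem_permsAvoiding312 hp.2.1 hp.2.2
  · rintro ⟨⟨i, j⟩, A, B⟩ hp ⟨⟨i', j'⟩, A', B'⟩ hp' heq
    simp only [coe_sigma, Set.mem_sigma_iff, mem_coe, Finset.mem_product] at hp hp' heq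
    have haA : a ∉ A := fun h => by have := bounds_of_mem_permsAvoiding312 hp.2.1 a h; omega
    have haB : a ∉ B := fun h => by have := bounds_of_mem_permsAvoiding312 hp.2.2 a h; omega
    obtain ⟨rfl, -, rfl⟩ := (append_cons_inj_of_notMem haA haB).mp heq
    obtain rfl : i = i' := (length_of_mem_permsAvoiding312 hp.2.1).symm.trans
      (length_of_mem_permsAvoiding312 hp'.2.1)
    obtain rfl : j = j' := (length_of_mem_permsAvoiding312 hp.2.2).symm.trans
      (length_of_mem_permsAvoiding312 hp'.2.2)
    rfl
  · intro w hw
    obtain ⟨A, B, rfl, hlen, hA, hB⟩ := exists_append_cons_of_mem_permsAvoiding312 hw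
    exact ⟨⟨(A.length, B.length), A, B⟩, by simp [hlen, hA, hB], rfl⟩

open Finset in
theorem card_permsAvoiding312 (a n : ℕ) : #(permsAvoiding312 a n) = catalan n := by
  induction n using Nat.strong_induction_on generalizing a with
  | _ n ih =>
    rcases n with _ | n
    · simp [permsAvoiding312_zero]
    · rw [card_permsAvoiding312_succ, catalan_succ']
      refine sum_congr rfl fun ij hij => ?_
      have := HasAntidiagonal.mem_antidiagonal.mp hij
      rw [ih _ (by omega), ih _ (by omega)]

end permsAvoiding312

/-- The number of 312-avoiding noncommutative crossing partitions of `[n]` is the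
`n`-th Catalan number. -/
theorem nccp312_card (n : ℕ) :
    {π : List (List ℕ) | IsNCCP n π ∧ Avoids312 π.flatten}.ncard = catalan n := by
  have hset : {π : List (List ℕ) | IsNCCP n π ∧ Avoids312 π.flatten} =
      ascendingRuns '' (permsAvoiding312 1 n : Set (List ℕ)) := by
    ext π
    simp only [Set.mem_ofPred_eq, isNCCP_iff, Set.mem_image, Finset.mem_coe, mem_permsAvoiding312]
    constructor
    · rintro ⟨⟨hperm, hruns⟩, hav⟩
      exact ⟨_, ⟨hperm, hav⟩, hruns⟩
    · rintro ⟨w, hw, rfl⟩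
      simpa [flatten_ascendingRuns] using hw
  rw [hset, Set.ncard_image_of_injective _ (Function.LeftInverse.injective flatten_ascendingRuns),
    Set.ncard_coe_finset, card_permsAvoiding312]
end

section
/- For any composition s of n, T(s) = T(s^rev), where s^rev is the reversed sequence. -/
/-- `Tnum s` is the number of noncommutative crossing partitions of type `s`,
i.e. whose sequence of block sizes is `s`. -/
noncomputable def Tnum (s : List ℕ) : ℕ :=
  {π : List (List ℕ) | IsNCCP s.sum π ∧ π.map List.length = s}.ncard

/-! The map `x ↦ n + 1 - x` reverses the order on `[n]`. Applying it to every entry and then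
reversing both the sequence of blocks and each block turns a noncommutative crossing partition
of type `s` into one of type `s.reverse`, and this operation is an involution. -/

def complementReverse (n : ℕ) (π : List (List ℕ)) : List (List ℕ) :=
  (π.map fun b => (b.map (n + 1 - ·)).reverse).reverse

theorem map_complement_range'_one (n : ℕ) :
    (List.range' 1 n).map (n + 1 - ·) = (List.range' 1 n).reverse := by
  rw [List.reverse_range', List.range'_eq_map_range, List.map_map]
  exact List.map_congr_left fun x _ => by simp only [Function.comp_apply]; omega

theorem flatten_complementReverse (n : ℕ) (π : List (List ℕ)) :
    (complementReverse n π).flatten = (π.flatten.map (n + 1 - ·)).reverse := by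
  simp only [complementReverse, List.flatten_reverse, List.map_map, Function.comp_def,
    List.reverse_reverse, List.map_flatten]

theorem map_length_complementReverse (n : ℕ) (π : List (List ℕ)) :
    (complementReverse n π).map List.length = (π.map List.length).reverse := by
  simp [complementReverse, List.map_reverse, Function.comp_def]

theorem complementReverse_complementReverse {n : ℕ} {π : List (List ℕ)}
    (hle : ∀ b ∈ π, ∀ x ∈ b, x ≤ n) : complementReverse n (complementReverse n π) = π := by
  simp only [complementReverse, List.map_reverse, List.reverse_reverse, List.map_map]
  conv_rhs => rw [← List.map_id π]
  refine List.map_congr_left fun b hb => ?_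
  conv_rhs => rw [← List.map_id b]
  simp only [Function.comp_apply, List.map_reverse, List.reverse_reverse, List.map_map]
  refine List.map_congr_left fun x hx => ?_
  have := hle b hb x hx
  simp only [Function.comp_apply, id]
  omega

namespace IsNCCP

variable {n : ℕ} {π : List (List ℕ)}

theorem mem_bounds (h : IsNCCP n π) {b : List ℕ} (hb : b ∈ π) {x : ℕ} (hx : x ∈ b) :
    1 ≤ x ∧ x ≤ n := by
  have := List.mem_range'_1.1 (h.1.mem_iff.1 (List.mem_flatten.2 ⟨b, hb, hx⟩))
  omega

theorem complementReverse (h : IsNCCP n π) : IsNCCP n (complementReverse n π) := by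
  obtain ⟨hperm, hblocks, hchain⟩ := h
  refine ⟨?perm, ?blocks, ?chain⟩
  case perm =>
    rw [flatten_complementReverse]
    refine (List.reverse_perm _).trans ((hperm.map _).trans ?_)
    rw [map_complement_range'_one]
    exact List.reverse_perm _
  case blocks =>
    simp only [_root_.complementReverse, List.mem_reverse, List.mem_map]
    rintro _ ⟨b, hb, rfl⟩
    refine ⟨by simpa using (hblocks b hb).1, ?_⟩
    rw [List.pairwise_reverse, List.pairwise_map]
    refine (hblocks b hb).2.imp_of_mem fun hx hy hxy => ?_
    have := mem_bounds ⟨hperm, hblocks, hchain⟩ hb hy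
    omega
  case chain =>
    rw [_root_.complementReverse, List.Chain', List.isChain_reverse, List.isChain_map]
    refine hchain.imp_of_mem_imp fun b b' hb hb' ⟨x, hx, y, hy, hyx⟩ => ?_
    have := mem_bounds ⟨hperm, hblocks, hchain⟩ hb hx
    exact ⟨n + 1 - y, List.mem_reverse.2 (List.mem_map_of_mem hy),
      n + 1 - x, List.mem_reverse.2 (List.mem_map_of_mem hx), by omega⟩

theorem complementReverse_complementReverse_eq (h : IsNCCP n π) :
    _root_.complementReverse n (_root_.complementReverse n π) = π :=
  complementReverse_complementReverse fun _ hb _ hx => (h.mem_bounds hb hx).2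

end IsNCCP

theorem Tnum_reverse_general (s : List ℕ) :
    Tnum s.reverse = Tnum s := by
  rw [Tnum, Tnum, List.sum_reverse]
  refine Set.ncard_congr (fun π _ => complementReverse s.sum π) ?mapsTo ?injOn ?surjOn
  case mapsTo =>
    rintro π ⟨hπ, hlen⟩
    exact ⟨hπ.complementReverse, by rw [map_length_complementReverse, hlen, List.reverse_reverse]⟩
  case injOn =>
    intro π σ hπ hσ heq
    rw [← hπ.1.complementReverse_complementReverse_eq, ← hσ.1.complementReverse_complementReverse_eq,
      heq]
  case surjOn =>
    rintro π ⟨hπ, hlen⟩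
    exact ⟨complementReverse s.sum π,
      ⟨hπ.complementReverse, by rw [map_length_complementReverse, hlen]⟩,
      hπ.complementReverse_complementReverse_eq⟩

/-- `T(s) = T(s^rev)` for any composition `s` (sequence of positive integers). -/
theorem Tnum_reverse (s : List ℕ) (hpos : ∀ x ∈ s, 0 < x) :
    Tnum s.reverse = Tnum s :=
  Tnum_reverse_general s
end

section
/- The number of canonical labeled binary trees with n nodes is the n-th Catalan number. -/
/-- Binary trees: each node has a (possibly empty) left subtree, a label, and a
(possibly empty) right subtree. -/
inductive BTree where
  | leaf : BTree
  | node : BTree → ℕ → BTree → BTree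

/-- The in-order reading word of the labels of a binary tree. -/
def BTree.labels : BTree → List ℕ
  | .leaf => []
  | .node l x r => l.labels ++ x :: r.labels

/-- Labels increase from the root towards the leaves. -/
def BTree.Incr : BTree → Prop
  | .leaf => True
  | .node l x r => (∀ y ∈ l.labels, x < y) ∧ (∀ y ∈ r.labels, x < y) ∧ l.Incr ∧ r.Incr

/-- A labeled binary tree with `n` nodes: labels are exactly `{1,...,n}`, each used once,
increasing from the root to the leaves. -/
def IsLabeledBTree (n : ℕ) (t : BTree) : Prop :=
  t.labels.Perm (List.range' 1 n) ∧ t.Incr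

/-- The node labeled `b` is weakly right of the node labeled `a`: `b` is a descendant of `a`,
or the paths to the root branch with `a` on the left and `b` on the right. -/
def BTree.WeaklyRight : BTree → ℕ → ℕ → Prop
  | .leaf, _, _ => False
  | .node l x r, a, b =>
      (x = a ∧ (b ∈ l.labels ∨ b ∈ r.labels)) ∨
      (a ∈ l.labels ∧ b ∈ r.labels) ∨
      l.WeaklyRight a b ∨ r.WeaklyRight a b

/-- A labeled binary tree is canonical if, for every `i`, the node labeled `i + 1`
is weakly right of the node labeled `i`. -/
def BTree.Canonical (t : BTree) : Prop :=
  ∀ i : ℕ, i ∈ t.labels → i + 1 ∈ t.labels → t.WeaklyRight i (i + 1)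

/-!
A canonical labeling is the preorder labeling. For a tree whose labels are distinct and form an
interval, being increasing and canonical is equivalent to the preorder word (root, left subtree,
right subtree) being increasing. The point is that canonicity puts every label of the left
subtree below every label of the right one: otherwise, walking through consecutive labels from a
right-subtree label up to a larger left-subtree label, each label is weakly right of the
previous one and so stays in the right subtree. A tree with preorder word `1, …, n` is determined
by its shape, and every shape carries one, so the count is the number of shapes with `n` nodes.
-/

theorem List.Pairwise.rel_of_mem_of_lt {α : Type*} [Preorder α] {R : α → α → Prop}
    {l : List α} (h : l.Pairwise fun a b => a < b ∧ R a b) {a b : α} (ha : a ∈ l) (hb : b ∈ l)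
    (hab : a < b) : R a b :=
  List.Pairwise.forall_of_forall_of_flip (R := fun a b => a < b → R a b)
    (fun _ _ h => absurd h (lt_irrefl _)) (h.imp fun h _ => h.2)
    (h.imp fun h h' => absurd h.1 (lt_asymm h')) ha hb hab

namespace BTree

def shape : BTree → BinaryTree Unit
  | leaf => .nil
  | node l _ r => .node () l.shape r.shape

def preorder : BTree → List ℕ
  | leaf => []
  | node l x r => x :: (l.preorder ++ r.preorder)

theorem preorder_perm_labels : ∀ t : BTree, t.preorder.Perm t.labels
  | leaf => .refl _
  | node l x r => ((preorder_perm_labels l).append (preorder_perm_labels r)).cons x |>.trans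
      List.perm_middle.symm

theorem mem_preorder {t : BTree} {a : ℕ} : a ∈ t.preorder ↔ a ∈ t.labels :=
  (preorder_perm_labels t).mem_iff

theorem length_preorder : ∀ t : BTree, t.preorder.length = t.shape.numNodes
  | leaf => rfl
  | node l _ r => by
    simp only [preorder, shape, BinaryTree.numNodes, List.length_cons, List.length_append,
      length_preorder l, length_preorder r]

theorem eq_of_shape_eq_of_preorder_eq :
    ∀ {t t' : BTree}, t.shape = t'.shape → t.preorder = t'.preorder → t = t'
  | leaf, leaf, _, _ => rfl
  | node l x r, node l' x' r', hs, hp => by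
    obtain ⟨hl, hr⟩ : l.shape = l'.shape ∧ r.shape = r'.shape := by
      simpa [shape] using hs
    obtain ⟨rfl, hlr⟩ := List.cons_eq_cons.mp hp
    obtain ⟨hpl, hpr⟩ := List.append_inj hlr (by rw [length_preorder, length_preorder, hl])
    rw [eq_of_shape_eq_of_preorder_eq hl hpl, eq_of_shape_eq_of_preorder_eq hr hpr]

def ofShape : BinaryTree Unit → ℕ → BTree
  | .nil, _ => leaf
  | .node _ l r, s => node (ofShape l (s + 1)) s (ofShape r (s + 1 + l.numNodes))

theorem shape_ofShape : ∀ (u : BinaryTree Unit) (s : ℕ), (ofShape u s).shape = u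
  | .nil, _ => rfl
  | .node () l r, s => by rw [ofShape, shape, shape_ofShape l, shape_ofShape r]

theorem preorder_ofShape :
    ∀ (u : BinaryTree Unit) (s : ℕ), (ofShape u s).preorder = List.range' s u.numNodes
  | .nil, _ => rfl
  | .node () l r, s => by
    rw [ofShape, preorder, preorder_ofShape l, preorder_ofShape r, List.range'_append_1]
    rfl

theorem mem_labels_of_weaklyRight :
    ∀ {t : BTree} {a b : ℕ}, t.WeaklyRight a b → a ∈ t.labels ∧ b ∈ t.labels
  | node l x r, a, b, h => by
    simp only [labels, List.mem_append, List.mem_cons]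
    rcases h with ⟨rfl, hb⟩ | ⟨ha, hb⟩ | h | h
    · tauto
    · tauto
    · have := mem_labels_of_weaklyRight h; tauto
    · have := mem_labels_of_weaklyRight h; tauto

theorem pairwise_weaklyRight_preorder : ∀ t : BTree, t.preorder.Pairwise t.WeaklyRight
  | leaf => .nil
  | node l x r => by
    simp only [preorder, List.pairwise_cons, List.pairwise_append, mem_preorder]
    refine ⟨fun b hb => .inl ⟨rfl, List.mem_append.mp hb |>.imp mem_preorder.mp mem_preorder.mp⟩,
      (pairwise_weaklyRight_preorder l).imp fun h => .inr (.inr (.inl h)),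
      (pairwise_weaklyRight_preorder r).imp fun h => .inr (.inr (.inr h)),
      fun a ha b hb => .inr (.inl ⟨ha, hb⟩)⟩

theorem incr_of_pairwise_preorder : ∀ {t : BTree}, t.preorder.Pairwise (· < ·) → t.Incr
  | leaf, _ => trivial
  | node l x r, h => by
    simp only [preorder, List.pairwise_cons, List.pairwise_append, List.mem_append,
      mem_preorder] at h
    exact ⟨fun y hy => h.1 y (.inl hy), fun y hy => h.1 y (.inr hy),
      incr_of_pairwise_preorder h.2.1, incr_of_pairwise_preorder h.2.2.1⟩

theorem canonical_of_pairwise_preorder {t : BTree} (h : t.preorder.Pairwise (· < ·)) :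
    t.Canonical := fun i hi hi' =>
  (h.and (pairwise_weaklyRight_preorder t)).rel_of_mem_of_lt (mem_preorder.mpr hi)
    (mem_preorder.mpr hi') i.lt_succ_self

section node

variable {l r : BTree} {x : ℕ}

theorem mem_labels_node {a : ℕ} :
    a ∈ (node l x r).labels ↔ a ∈ l.labels ∨ a = x ∨ a ∈ r.labels := by
  simp only [labels, List.mem_append, List.mem_cons]

theorem weaklyRight_left_of_node (hxl : x ∉ l.labels) (hlr : l.labels.Disjoint r.labels)
    {a b : ℕ} (ha : a ∈ l.labels) (hb : b ∈ l.labels) (h : (node l x r).WeaklyRight a b) :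
    l.WeaklyRight a b := by
  rcases h with ⟨rfl, -⟩ | ⟨-, hb'⟩ | h | h
  · exact absurd ha hxl
  · exact absurd hb' (hlr hb)
  · exact h
  · exact absurd (mem_labels_of_weaklyRight h).1 (hlr ha)

theorem weaklyRight_right_of_node (hxr : x ∉ r.labels) (hlr : l.labels.Disjoint r.labels)
    {a b : ℕ} (ha : a ∈ r.labels) (h : (node l x r).WeaklyRight a b) : r.WeaklyRight a b := by
  rcases h with ⟨rfl, -⟩ | ⟨ha', -⟩ | h | h
  · exact absurd ha hxr
  · exact absurd ha (hlr ha')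
  · exact absurd ha (hlr (mem_labels_of_weaklyRight h).1)
  · exact h

theorem lt_of_mem_left_of_mem_right (hc : (node l x r).Canonical)
    (hconn : Set.OrdConnected {a | a ∈ (node l x r).labels}) (hxr : x ∉ r.labels)
    (hlr : l.labels.Disjoint r.labels) {a b : ℕ} (ha : a ∈ l.labels) (hb : b ∈ r.labels) :
    a < b := by
  by_contra! hba
  have hmem_l : a ∈ (node l x r).labels := mem_labels_node.mpr (.inl ha)
  have hmem_r : ∀ {c}, c ∈ r.labels → c ∈ (node l x r).labels :=
    fun hc => mem_labels_node.mpr (.inr (.inr hc))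
  suffices ∀ c, b ≤ c → c ≤ a → c ∈ r.labels from hlr ha (this a hba le_rfl)
  intro c hbc
  induction c, hbc using Nat.le_induction with
  | base => exact fun _ => hb
  | succ c hbc ih =>
    intro hca
    have hcr := ih (by omega)
    have hc' := hconn.out (hmem_r hb) hmem_l ⟨by omega, hca⟩
    exact (mem_labels_of_weaklyRight (weaklyRight_right_of_node hxr hlr hcr
      (hc c (hmem_r hcr) hc'))).2

theorem ordConnected_labels_left (hconn : Set.OrdConnected {a | a ∈ (node l x r).labels})
    (hxl : ∀ y ∈ l.labels, x < y) (hlt : ∀ a ∈ l.labels, ∀ b ∈ r.labels, a < b) :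
    Set.OrdConnected {a | a ∈ l.labels} :=
  ⟨fun a ha b hb c ⟨hac, hcb⟩ => by
    rcases mem_labels_node.mp (hconn.out (mem_labels_node.mpr (.inl ha))
      (mem_labels_node.mpr (.inl hb)) ⟨hac, hcb⟩) with h | rfl | h
    · exact h
    · exact absurd (hxl a ha) (not_lt.mpr hac)
    · exact absurd (hlt b hb c h) (not_lt.mpr hcb)⟩

theorem ordConnected_labels_right (hconn : Set.OrdConnected {a | a ∈ (node l x r).labels})
    (hxr : ∀ y ∈ r.labels, x < y) (hlt : ∀ a ∈ l.labels, ∀ b ∈ r.labels, a < b) :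
    Set.OrdConnected {a | a ∈ r.labels} :=
  ⟨fun a ha b hb c ⟨hac, hcb⟩ => by
    rcases mem_labels_node.mp (hconn.out (mem_labels_node.mpr (.inr (.inr ha)))
      (mem_labels_node.mpr (.inr (.inr hb))) ⟨hac, hcb⟩) with h | rfl | h
    · exact absurd (hlt c h a ha) (not_lt.mpr hac)
    · exact absurd (hxr a ha) (not_lt.mpr hac)
    · exact h⟩

end node

theorem pairwise_preorder_of_canonical :
    ∀ {t : BTree}, t.labels.Nodup → Set.OrdConnected {a | a ∈ t.labels} → t.Incr →
      t.Canonical → t.preorder.Pairwise (· < ·)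
  | leaf, _, _, _, _ => .nil
  | node l x r, hn, hconn, ⟨hxl, hxr, hil, hir⟩, hc => by
    have hlr : l.labels.Disjoint r.labels :=
      (List.disjoint_cons_right.mp (List.disjoint_of_nodup_append hn)).2
    have hxl' : x ∉ l.labels := fun h => lt_irrefl x (hxl x h)
    have hxr' : x ∉ r.labels := fun h => lt_irrefl x (hxr x h)
    have hlt : ∀ a ∈ l.labels, ∀ b ∈ r.labels, a < b := fun _ ha _ hb =>
      lt_of_mem_left_of_mem_right hc hconn hxr' hlr ha hb
    have hcl : l.Canonical := fun i hi hi' => weaklyRight_left_of_node hxl' hlr hi hi'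
      (hc i (mem_labels_node.mpr (.inl hi)) (mem_labels_node.mpr (.inl hi')))
    have hcr : r.Canonical := fun i hi hi' => weaklyRight_right_of_node hxr' hlr hi
      (hc i (mem_labels_node.mpr (.inr (.inr hi))) (mem_labels_node.mpr (.inr (.inr hi'))))
    simp only [preorder, List.pairwise_cons, List.pairwise_append, List.mem_append, mem_preorder]
    exact ⟨fun y hy => hy.elim (hxl y) (hxr y),
      pairwise_preorder_of_canonical hn.of_append_left (ordConnected_labels_left hconn hxl hlt) hil hcl,
      pairwise_preorder_of_canonical hn.of_append_right.of_cons (ordConnected_labels_right hconn hxr hlt)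
        hir hcr,
      hlt⟩

theorem shape_image_setOf_preorder_eq_range' (s n : ℕ) :
    shape '' {t | t.preorder = List.range' s n} = {u | u.numNodes = n} := by
  ext u
  constructor
  · rintro ⟨t, ht : t.preorder = _, rfl⟩
    rw [Set.mem_ofPred, ← length_preorder, ht, List.length_range']
  · rintro rfl
    exact ⟨ofShape u s, preorder_ofShape u s, shape_ofShape u s⟩

theorem injOn_shape_setOf_preorder_eq (L : List ℕ) : Set.InjOn shape {t | t.preorder = L} :=
  fun _ ht _ ht' h => eq_of_shape_eq_of_preorder_eq h (ht.trans ht'.symm)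

end BTree

theorem isLabeledBTree_and_canonical_iff_preorder_eq_range' {n : ℕ} {t : BTree} :
    IsLabeledBTree n t ∧ t.Canonical ↔ t.preorder = List.range' 1 n := by
  constructor
  · rintro ⟨⟨hp, hi⟩, hc⟩
    have hconn : Set.OrdConnected {a | a ∈ t.labels} := by
      have : {a | a ∈ t.labels} = Set.Ico 1 (1 + n) := by ext; simp [hp.mem_iff]
      exact this ▸ Set.ordConnected_Ico
    exact (BTree.pairwise_preorder_of_canonical (hp.nodup_iff.mpr List.nodup_range') hconn hi hc
      ).eq_of_mem_iff List.pairwise_lt_range' fun a => by rw [BTree.mem_preorder, hp.mem_iff]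
  · intro h
    have hsorted : t.preorder.Pairwise (· < ·) := h ▸ List.pairwise_lt_range'
    exact ⟨⟨h ▸ (BTree.preorder_perm_labels t).symm, BTree.incr_of_pairwise_preorder hsorted⟩,
      BTree.canonical_of_pairwise_preorder hsorted⟩

/-- The number of canonical labeled binary trees with `n` nodes is the `n`-th
Catalan number. -/
theorem canonicalBTree_card (n : ℕ) :
    {t : BTree | IsLabeledBTree n t ∧ t.Canonical}.ncard = catalan n := by
  simp only [isLabeledBTree_and_canonical_iff_preorder_eq_range']
  rw [← (BTree.injOn_shape_setOf_preorder_eq _).ncard_image,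
    BTree.shape_image_setOf_preorder_eq_range', ← BinaryTree.coe_treesOfNumNodesEq,
    Set.ncard_coe_finset, BinaryTree.treesOfNumNodesEq_card_eq_catalan]
end

section
/- There is a bijection between NCCP(n;312), the set of 312-avoiding noncommutative crossing partitions of [n], and NCP(n), the set of non-crossing canonical partitions of [n]. -/
/-- Non-crossing: there are no `a < b < c < d` with `a, c` in one block and `b, d`
in a different block. -/
def IsNonCrossing (π : List (List ℕ)) : Prop :=
  ∀ a b c d : ℕ, a < b → b < c → c < d →
    ∀ i j : ℕ, i < π.length → j < π.length → i ≠ j →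
      ¬(a ∈ π.getD i [] ∧ c ∈ π.getD i [] ∧ b ∈ π.getD j [] ∧ d ∈ π.getD j [])

/-- Canonical: the minima of the blocks strictly decrease from left to right, i.e.
`min(π_{i+1}) < min(π_i)` for consecutive blocks. -/
def IsCanonicalPart (π : List (List ℕ)) : Prop :=
  π.Chain' (fun b b' => ∃ y ∈ b', ∀ x ∈ b, y < x)

/-!
Since blocks increase and consecutive blocks meet at a descent, an NCCP is exactly the cutting of
its word `π.flatten` into maximal ascending runs; so NCCPs of `[n]` are permutations of `[n]`.
Complementing the word, `x ↦ n + 1 - x`, exchanges the patterns 312 and 132, and recutting into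
runs gives an involution on NCCPs. It remains to see that an NCCP avoids 132 iff it is
non-crossing and canonical. A 132 occurrence `u v w` (`u < w < v`) puts `v` and `w` in different
blocks, since blocks increase; canonicity gives a letter `s ≤ u` in the block of `v` and a letter
`y < s` in the block of `w`, and `y < s < w < v` is a crossing. Conversely, a crossing or a
non-canonical descent between blocks exhibits a 132.
-/

open List

theorem List.IsChain.and_pairwise {α : Type*} {R S : α → α → Prop} {l : List α}
    (hR : l.IsChain R) (hS : l.Pairwise S) : l.IsChain fun a b => R a b ∧ S a b := by
  induction hR with
  | nil => exact .nil
  | singleton a => exact .singleton a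
  | cons_cons hab _ ih =>
    exact .cons_cons ⟨hab, rel_of_pairwise_cons hS mem_cons_self⟩ (ih hS.of_cons)

theorem List.append_getElem_sublist_flatten {α : Type*} {L : List (List α)} {i j : ℕ}
    (hij : i < j) (hj : j < L.length) : L[i] ++ L[j] <+ L.flatten := by
  simpa using (map_getElem_sublist (l := L) (is := [⟨i, by omega⟩, ⟨j, hj⟩])
    (by simpa using hij)).flatten

theorem List.Pairwise.pair_sublist {α : Type*} [Preorder α] {x y : α} {l : List α}
    (hl : l.Pairwise (· < ·)) (hx : x ∈ l) (hy : y ∈ l) (hxy : x < y) : [x, y] <+ l :=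
  sublist_of_subperm_of_pairwise (Nodup.subperm (by simpa using hxy.ne) (by simp [subset_def, *]))
    (by simpa using hxy) hl

theorem List.exists_of_triple_sublist_map {α β : Type*} {f : α → β} {a b c : β} {l : List α}
    (h : [a, b, c] <+ l.map f) : ∃ x y z, [x, y, z] <+ l ∧ f x = a ∧ f y = b ∧ f z = c := by
  obtain ⟨l', hl', hl'l⟩ := sublist_map_iff.1 h
  rcases l' with _ | ⟨x, _ | ⟨y, _ | ⟨z, _ | _⟩⟩⟩ <;>
    simp only [map_nil, map_cons, cons.injEq, reduceCtorEq, nil_eq, and_false, and_true] at hl'l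
  obtain ⟨rfl, rfl, rfl⟩ := hl'l
  exact ⟨x, y, z, hl', rfl, rfl, rfl⟩

def Contains132 (w : List ℕ) : Prop := ∃ x y z, [x, y, z] <+ w ∧ x < z ∧ z < y

def Contains312 (w : List ℕ) : Prop := ∃ x y z, [x, y, z] <+ w ∧ y < z ∧ z < x

theorem avoids312_iff_not_contains312 (w : List ℕ) : Avoids312 w ↔ ¬ Contains312 w := by
  refine not_congr ⟨?_, ?_⟩
  · rintro ⟨i, j, k, hij, hjk, hk, hji, hkj⟩
    have hsub := map_getElem_sublist (l := w)
      (is := [⟨i, by omega⟩, ⟨j, by omega⟩, ⟨k, hk⟩]) (by simp; omega)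
    simp only [getD_eq_getElem _ _ (show i < w.length by omega),
      getD_eq_getElem _ _ (show j < w.length by omega), getD_eq_getElem _ _ hk] at hji hkj
    exact ⟨_, _, _, hsub, hji, hkj⟩
  · rintro ⟨x, y, z, hsub, hyz, hzx⟩
    obtain ⟨f, hf⟩ := sublist_iff_exists_fin_orderEmbedding_get_eq.1 hsub
    refine ⟨f 0, f 1, f 2, f.lt_iff_lt.2 (show (0 : Fin 3) < 1 by decide),
      f.lt_iff_lt.2 (show (1 : Fin 3) < 2 by decide), (f 2).isLt, ?_⟩
    have hx : w[(f 0 : ℕ)] = x := (hf 0).symm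
    have hy : w[(f 1 : ℕ)] = y := (hf 1).symm
    have hz : w[(f 2 : ℕ)] = z := (hf 2).symm
    simp only [getD_eq_getElem _ _ (f _).isLt, hx, hy, hz]
    exact ⟨hyz, hzx⟩

theorem Contains132.mono {v w : List ℕ} (h : Contains132 v) (hvw : v <+ w) : Contains132 w :=
  let ⟨x, y, z, hs, hxz, hzy⟩ := h
  ⟨x, y, z, hs.trans hvw, hxz, hzy⟩

theorem Contains132.of_map {f : ℕ → ℕ} {w : List ℕ} (hf : StrictAntiOn f {x | x ∈ w})
    (h : Contains132 (w.map f)) : Contains312 w := by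
  obtain ⟨_, _, _, hmap, hxz, hzy⟩ := h
  obtain ⟨x, y, z, hsub, rfl, rfl, rfl⟩ := exists_of_triple_sublist_map hmap
  have hmem : ∀ t ∈ [x, y, z], t ∈ w := hsub.subset
  exact ⟨x, y, z, hsub, (hf.lt_iff_gt (hmem z (by simp)) (hmem y (by simp))).1 hzy,
    (hf.lt_iff_gt (hmem x (by simp)) (hmem z (by simp))).1 hxz⟩

theorem Contains312.of_map {f : ℕ → ℕ} {w : List ℕ} (hf : StrictAntiOn f {x | x ∈ w})
    (h : Contains312 (w.map f)) : Contains132 w := by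
  obtain ⟨_, _, _, hmap, hyz, hzx⟩ := h
  obtain ⟨x, y, z, hsub, rfl, rfl, rfl⟩ := exists_of_triple_sublist_map hmap
  have hmem : ∀ t ∈ [x, y, z], t ∈ w := hsub.subset
  exact ⟨x, y, z, hsub, (hf.lt_iff_gt (hmem z (by simp)) (hmem x (by simp))).1 hzx,
    (hf.lt_iff_gt (hmem y (by simp)) (hmem z (by simp))).1 hyz⟩

theorem isNCCP_splitBy {n : ℕ} {w : List ℕ} (hw : w.Perm (range' 1 n)) :
    IsNCCP n (w.splitBy (· < ·)) := by
  have hdisj : (w.splitBy (· < ·)).Pairwise Disjoint :=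
    (nodup_flatten.1 (by rw [flatten_splitBy]; exact hw.nodup_iff.2 nodup_range')).2
  refine ⟨by rwa [flatten_splitBy], fun b hb => ⟨ne_nil_of_mem_splitBy hb,
    isChain_iff_pairwise.1 (by simpa using isChain_of_mem_splitBy hb)⟩, ?_⟩
  refine ((isChain_getLast_head_splitBy _ w).and_pairwise hdisj).imp ?_
  rintro a b ⟨⟨ha, hb, hlt⟩, hab⟩
  have hne : b.head hb ≠ a.getLast ha := fun e => hab (getLast_mem ha) (e ▸ head_mem hb)
  refine ⟨_, getLast_mem ha, _, head_mem hb, ?_⟩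
  simp only [decide_eq_false_iff_not, not_lt] at hlt
  omega

theorem IsNCCP.splitBy_flatten {n : ℕ} {π : List (List ℕ)} (h : IsNCCP n π) :
    π.flatten.splitBy (· < ·) = π := by
  obtain ⟨-, hblocks, hchain⟩ := h
  refine List.splitBy_flatten (fun hnil => (hblocks [] hnil).1 rfl)
    (fun b hb => by simpa using (hblocks b hb).2.isChain) (hchain.imp_of_mem_imp ?_)
  rintro a b ha hb ⟨x, hx, y, hy, hyx⟩
  refine ⟨ne_nil_of_mem hx, ne_nil_of_mem hy, ?_⟩
  have hxa := ((hblocks a ha).2.imp le_of_lt).rel_getLast hx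
  have hby := ((hblocks b hb).2.imp le_of_lt).rel_head hy
  simp only [decide_eq_false_iff_not, not_lt]
  omega

theorem IsNCCP.nodup_flatten {n : ℕ} {π : List (List ℕ)} (h : IsNCCP n π) : π.flatten.Nodup :=
  h.1.nodup_iff.2 nodup_range'

theorem contains132_of_mem_getElem {π : List (List ℕ)} {i j : ℕ} (hij : i < j)
    (hj : j < π.length) (hsorted : π[i].Pairwise (· < ·)) {x y z : ℕ} (hx : x ∈ π[i])
    (hy : y ∈ π[i]) (hz : z ∈ π[j]) (hxz : x < z) (hzy : z < y) : Contains132 π.flatten :=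
  ⟨x, y, z, ((hsorted.pair_sublist hx hy (by omega)).append (singleton_sublist.2 hz)).trans
    (append_getElem_sublist_flatten hij hj), hxz, hzy⟩

theorem isNonCrossing_of_not_contains132 {π : List (List ℕ)}
    (hsorted : ∀ b ∈ π, b.Pairwise (· < ·)) (h132 : ¬ Contains132 π.flatten) :
    IsNonCrossing π := by
  intro a b c d hab hbc hcd i j hi hj hij ⟨ha, hc, hb, hd⟩
  rw [getD_eq_getElem _ _ hi] at ha hc
  rw [getD_eq_getElem _ _ hj] at hb hd
  rcases Nat.lt_or_gt_of_ne hij with hlt | hlt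
  · exact h132 (contains132_of_mem_getElem hlt hj (hsorted _ (getElem_mem _)) ha hc hb hab hbc)
  · exact h132 (contains132_of_mem_getElem hlt hi (hsorted _ (getElem_mem _)) hb hd hc hbc hcd)

theorem exists_lt_forall_of_not_contains132 {b c : List ℕ} (hb : b.Pairwise (· < ·))
    (hnd : (b ++ c).Nodup) (h132 : ¬ Contains132 (b ++ c)) (hbc : ∃ x ∈ b, ∃ y ∈ c, y < x) :
    ∃ y ∈ c, ∀ x ∈ b, y < x := by
  obtain ⟨x₀, hx₀, y, hy, hyx₀⟩ := hbc
  refine ⟨y, hy, fun x hx => ?_⟩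
  by_contra! hxy
  have hne : x ≠ y := (nodup_append.1 hnd).2.2 x hx y hy
  exact h132 ⟨x, x₀, y, (hb.pair_sublist hx hx₀ (by omega)).append (singleton_sublist.2 hy),
    by omega, hyx₀⟩

theorem IsNCCP.isCanonicalPart_of_not_contains132 {n : ℕ} {π : List (List ℕ)} (h : IsNCCP n π)
    (h132 : ¬ Contains132 π.flatten) : IsCanonicalPart π := by
  have hchain : π.IsChain _ := h.2.2
  rw [isChain_iff_getElem] at hchain
  refine isChain_iff_getElem.2 fun i hi => ?_
  have hsub := append_getElem_sublist_flatten (Nat.lt_succ_self i) hi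
  exact exists_lt_forall_of_not_contains132 (h.2.1 _ (getElem_mem _)).2
    (h.nodup_flatten.sublist hsub) (fun h' => h132 (h'.mono hsub)) (hchain i hi)

theorem IsNonCrossing.of_cons {b : List ℕ} {π : List (List ℕ)} (h : IsNonCrossing (b :: π)) :
    IsNonCrossing π := fun x y z t hxy hyz hzt i j hi hj hij => by
  simpa using h x y z t hxy hyz hzt (i + 1) (j + 1) (by simpa) (by simpa) (by omega)

theorem IsNonCrossing.false_of_mem_cons {b c : List ℕ} {π : List (List ℕ)}
    (h : IsNonCrossing (b :: π)) (hc : c ∈ π) {x y z t : ℕ} (hxy : x < y) (hyz : y < z)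
    (hzt : z < t) (hx : x ∈ c) (hy : y ∈ b) (hz : z ∈ c) (ht : t ∈ b) : False := by
  obtain ⟨r, hr, rfl⟩ := getElem_of_mem hc
  exact h x y z t hxy hyz hzt (r + 1) 0 (by simpa) (by simp) (by omega) (by simp [*])

theorem IsCanonicalPart.pairwise {π : List (List ℕ)} (h : IsCanonicalPart π) :
    π.Pairwise fun b c => ∃ y ∈ c, ∀ x ∈ b, y < x := by
  have : Trans (fun b c : List ℕ => ∃ y ∈ c, ∀ x ∈ b, y < x)
      (fun b c : List ℕ => ∃ y ∈ c, ∀ x ∈ b, y < x) (fun b c : List ℕ => ∃ y ∈ c, ∀ x ∈ b, y < x) :=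
    ⟨by
      rintro a b c ⟨y, hy, hyb⟩ ⟨z, hz, hzc⟩
      exact ⟨z, hz, fun x hx => (hzc y hy).trans (hyb x hx)⟩⟩
  exact isChain_iff_pairwise.1 h

theorem contains132_cons_of_pair_sublist {c : List ℕ} {π : List (List ℕ)}
    (hc : c.Pairwise (· < ·)) {y v w : ℕ} (hy : y ∈ c) (hyw : y < w) (hwv : w < v)
    (hvw : [v, w] <+ (c :: π).flatten) : Contains132 (c :: π).flatten := by
  rcases c with _ | ⟨m, c⟩
  · simp at hy
  have hmy : m ≤ y := by simpa using (hc.imp le_of_lt).rel_head hy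
  rcases sublist_cons_iff.1 (by simpa using hvw : [v, w] <+ m :: (c ++ π.flatten)) with
    hvw | ⟨r, hr, -⟩
  · exact ⟨m, v, w, by simpa using hvw.cons_cons m, by omega, hwv⟩
  · exact absurd (cons.inj hr).1 (by omega)

theorem not_contains132_of_isNonCrossing {π : List (List ℕ)}
    (hsorted : ∀ b ∈ π, b.Pairwise (· < ·)) (hcan : IsCanonicalPart π) (hnc : IsNonCrossing π) :
    ¬ Contains132 π.flatten := by
  induction π with
  | nil =>
    rintro ⟨x, y, z, hs, -⟩
    simp at hs
  | cons b π ih =>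
    have ih := ih (fun c hc => hsorted c (mem_cons_of_mem _ hc)) hcan.tail hnc.of_cons
    have hbelow : ∀ c ∈ π, ∃ y ∈ c, ∀ x ∈ b, y < x :=
      fun c hc => rel_of_pairwise_cons hcan.pairwise hc
    rintro ⟨u, v, w, hs, huw, hwv⟩
    obtain ⟨l₁, l₂, hsplit, hl₁, hl₂⟩ := sublist_append_iff.1 hs
    rcases l₁ with _ | ⟨u', _ | ⟨v', _ | ⟨w', _ | _⟩⟩⟩ <;>
      simp only [cons_append, nil_append, cons.injEq, nil_eq, reduceCtorEq, and_false] at hsplit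
    · exact ih ⟨u, v, w, hsplit ▸ hl₂, huw, hwv⟩
    · -- `u ∈ b`: the first letter of `π.flatten` lies below `u` by canonicity and can replace it
      obtain ⟨rfl, rfl⟩ := hsplit
      rcases π with _ | ⟨c, π⟩
      · simp at hl₂
      obtain ⟨y, hy, hyb⟩ := hbelow c mem_cons_self
      exact ih <| contains132_cons_of_pair_sublist (hsorted c (by simp)) hy
        ((hyb u (singleton_sublist.1 hl₁)).trans huw) hwv hl₂
    · -- `u, v ∈ b`: the block of `w` has a letter below `u`, which makes a crossing
      obtain ⟨rfl, rfl, rfl⟩ := hsplit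
      obtain ⟨c, hc, hw⟩ := mem_flatten.1 (singleton_sublist.1 hl₂)
      obtain ⟨y, hy, hyb⟩ := hbelow c hc
      have hu : u ∈ b := hl₁.subset (by simp)
      exact hnc.false_of_mem_cons hc (hyb u hu) huw hwv hy hu hw (hl₁.subset (by simp))
    · obtain ⟨rfl, rfl, rfl, -⟩ := hsplit
      have hvw : v < w :=
        rel_of_pairwise_cons ((hsorted b mem_cons_self).sublist hl₁).of_cons (mem_singleton_self w)
      omega

theorem IsNCCP.not_contains132_iff {n : ℕ} {π : List (List ℕ)} (h : IsNCCP n π) :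
    ¬ Contains132 π.flatten ↔ IsNonCrossing π ∧ IsCanonicalPart π :=
  ⟨fun h132 => ⟨isNonCrossing_of_not_contains132 (fun b hb => (h.2.1 b hb).2) h132,
      h.isCanonicalPart_of_not_contains132 h132⟩,
    fun ⟨hnc, hcan⟩ => not_contains132_of_isNonCrossing (fun b hb => (h.2.1 b hb).2) hcan hnc⟩

def complementRuns (n : ℕ) (π : List (List ℕ)) : List (List ℕ) :=
  (π.flatten.map (n + 1 - ·)).splitBy (· < ·)

theorem map_complement_range' (n : ℕ) : (range' 1 n).map (n + 1 - ·) = (range' 1 n).reverse := by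
  rw [reverse_range', range'_eq_map_range, map_map]
  exact map_congr_left fun i _ => by simp only [Function.comp_apply]; omega

theorem IsNCCP.strictAntiOn_complement {n : ℕ} {π : List (List ℕ)} (h : IsNCCP n π) :
    StrictAntiOn (n + 1 - ·) {x | x ∈ π.flatten} := by
  intro x _ y hy hxy
  have := mem_range'_1.1 (h.1.subset hy)
  dsimp only
  omega

theorem isNCCP_complementRuns {n : ℕ} {π : List (List ℕ)} (h : IsNCCP n π) :
    IsNCCP n (complementRuns n π) :=
  isNCCP_splitBy <| ((h.1.map _).trans (by rw [map_complement_range'])).trans (reverse_perm _)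

theorem IsNCCP.complementRuns_complementRuns {n : ℕ} {π : List (List ℕ)} (h : IsNCCP n π) :
    complementRuns n (complementRuns n π) = π := by
  have hcompl : (π.flatten.map (n + 1 - ·)).map (n + 1 - ·) = π.flatten := by
    rw [map_map]
    refine (map_congr_left fun x hx => ?_).trans (map_id _)
    have := mem_range'_1.1 (h.1.subset hx)
    simp only [Function.comp_apply, id]
    omega
  rw [complementRuns, complementRuns, flatten_splitBy, hcompl, h.splitBy_flatten]

theorem IsNCCP.not_contains132_complementRuns {n : ℕ} {π : List (List ℕ)} (h : IsNCCP n π)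
    (h312 : ¬ Contains312 π.flatten) : ¬ Contains132 (complementRuns n π).flatten := by
  rw [complementRuns, flatten_splitBy]
  exact fun h132 => h312 (h132.of_map h.strictAntiOn_complement)

theorem IsNCCP.not_contains312_complementRuns {n : ℕ} {π : List (List ℕ)} (h : IsNCCP n π)
    (h132 : ¬ Contains132 π.flatten) : ¬ Contains312 (complementRuns n π).flatten := by
  rw [complementRuns, flatten_splitBy]
  exact fun h312 => h132 (h312.of_map h.strictAntiOn_complement)

/-- There is a bijection between `NCCP(n;312)` and `NCP(n)`. -/
theorem nccp312_equiv_ncp (n : ℕ) :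
    Nonempty
      ({π : List (List ℕ) // IsNCCP n π ∧ Avoids312 π.flatten} ≃
       {π : List (List ℕ) // IsNCCP n π ∧ IsNonCrossing π ∧ IsCanonicalPart π}) :=
  ⟨{ toFun := fun π => ⟨complementRuns n π, isNCCP_complementRuns π.2.1,
        (isNCCP_complementRuns π.2.1).not_contains132_iff.1 <|
          π.2.1.not_contains132_complementRuns ((avoids312_iff_not_contains312 _).1 π.2.2)⟩
     invFun := fun π => ⟨complementRuns n π, isNCCP_complementRuns π.2.1,
        (avoids312_iff_not_contains312 _).2 <|
          π.2.1.not_contains312_complementRuns (π.2.1.not_contains132_iff.2 π.2.2)⟩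
     left_inv := fun π => Subtype.ext π.2.1.complementRuns_complementRuns
     right_inv := fun π => Subtype.ext π.2.1.complementRuns_complementRuns }⟩
end

section
/- The set NCP(n) of non-crossing canonical partitions of [n] equals the set NCCP(n;132) of 132-avoiding noncommutative crossing partitions of [n]. -/
/-- A word avoids the pattern 132: no positions `i < j < k` with `w_i < w_k < w_j`. -/
def Avoids132 (w : List ℕ) : Prop :=
  ¬ ∃ i j k : ℕ, i < j ∧ j < k ∧ k < w.length ∧
      w.getD i 0 < w.getD k 0 ∧ w.getD k 0 < w.getD j 0

/-! In `π.flatten` an entry `x` precedes `y` (`[x, y] <+ π.flatten`) exactly when the block of `x`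
comes before the block of `y`, or both lie in one block and `x < y`. So a crossing `a < b < c < d`,
with `a, c` in one block and `b, d` in another, shows up as the 132 pattern `a c b` or `b d c`. For
consecutive blocks `B, B'`, the NCCP witness `y < x₁` with `x₁ ∈ B`, `y ∈ B'` is also a canonicity
witness: any `x₀ ∈ B` with `x₀ ≤ y` would give the pattern `x₀ x₁ y`. Conversely, in a pattern
`a b c` with `a < c < b` the block of `b` precedes that of `c`; canonicity yields `z ≤ a` in the
block of `b` and a smaller `y` in the block of `c`, and `y < z < c < b` is a crossing. -/

namespace List

variable {α : Type*}

theorem Nodup.triple_sublist {l : List α} (hl : l.Nodup) {a b c : α} (hab : [a, b] <+ l)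
    (hbc : [b, c] <+ l) : [a, b, c] <+ l := by
  induction l with
  | nil => simp at hab
  | cons z t ih =>
    obtain ⟨hz, ht⟩ := nodup_cons.1 hl
    rw [sublist_cons_iff] at hab hbc
    rcases hab with hab | ⟨r, hr, hbt⟩ <;> rcases hbc with hbc | ⟨s, hs, hct⟩
    · exact (ih ht hab hbc).cons z
    · obtain ⟨rfl, -⟩ := cons_eq_cons.1 hs
      exact absurd (hab.subset (by simp)) hz
    · obtain ⟨rfl, rfl⟩ := cons_eq_cons.1 hr
      exact hbc.cons_cons a
    · obtain ⟨rfl, rfl⟩ := cons_eq_cons.1 hr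
      obtain ⟨rfl, -⟩ := cons_eq_cons.1 hs
      exact absurd (hbt.subset (by simp)) hz

theorem Nodup.not_sublist_swap {l : List α} (hl : l.Nodup) {a b : α} (hab : [a, b] <+ l) :
    ¬[b, a] <+ l := fun hba =>
  nodup_iff_sublist.1 hl a
    ((((Sublist.refl [a]).cons b).cons_cons a).trans (hl.triple_sublist hab hba))

theorem Pairwise.pair_sublist_s9 [Preorder α] {l : List α} (hl : l.Pairwise (· < ·)) {x y : α}
    (hx : x ∈ l) (hy : y ∈ l) (hxy : x < y) : [x, y] <+ l :=
  sublist_of_subperm_of_pairwise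
    (subperm_of_subset (by simpa using hxy.ne) (by simp [hx, hy, subset_def]))
    (by simpa using hxy) hl

theorem pair_sublist_flatten_of_lt {π : List (List α)} {i j : ℕ} (hij : i < j)
    (hj : j < π.length) {x y : α} (hx : x ∈ π[i]) (hy : y ∈ π[j]) : [x, y] <+ π.flatten := by
  have hblocks : [π[i], π[j]] <+ π :=
    map_getElem_sublist (is := [⟨i, by omega⟩, ⟨j, hj⟩]) (by simpa using hij)
  have hflat : π[i] ++ π[j] <+ π.flatten := by simpa using hblocks.flatten
  exact ((singleton_sublist.2 hx).append (singleton_sublist.2 hy)).trans hflat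

theorem pair_sublist_flatten_iff [LinearOrder α] {π : List (List α)}
    (hs : ∀ b ∈ π, b.Pairwise (· < ·)) (hnd : π.flatten.Nodup) {i j : ℕ} (hi : i < π.length)
    (hj : j < π.length) {x y : α} (hx : x ∈ π[i]) (hy : y ∈ π[j]) :
    [x, y] <+ π.flatten ↔ i < j ∨ i = j ∧ x < y := by
  have hsub : ∀ {i j : ℕ} (hi : i < π.length) (hj : j < π.length) {x y : α},
      x ∈ π[i] → y ∈ π[j] → (i < j ∨ i = j ∧ x < y) → [x, y] <+ π.flatten := by
    rintro i j hi hj x y hx hy (hij | ⟨rfl, hxy⟩)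
    · exact pair_sublist_flatten_of_lt hij hj hx hy
    · exact ((hs _ (getElem_mem hi)).pair_sublist_s9 hx hy hxy).trans
        (sublist_flatten_of_mem (getElem_mem hi))
  refine ⟨fun hxy => ?_, hsub hi hj hx hy⟩
  by_contra! hne
  rcases lt_or_eq_of_le hne.1 with hji | rfl
  · exact hnd.not_sublist_swap hxy (hsub hj hi hy hx (Or.inl hji))
  · rcases lt_or_eq_of_le (hne.2 rfl) with hyx | rfl
    · exact hnd.not_sublist_swap hxy (hsub hi hi hy hx (Or.inr ⟨rfl, hyx⟩))
    · exact nodup_iff_sublist.1 hnd y hxy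

theorem exists_mem_getElem_of_mem_flatten {π : List (List α)} {x : α} (hx : x ∈ π.flatten) :
    ∃ (i : ℕ) (hi : i < π.length), x ∈ π[i] := by
  obtain ⟨_, hb, hxb⟩ := mem_flatten.1 hx
  obtain ⟨i, hi, rfl⟩ := mem_iff_getElem.1 hb
  exact ⟨i, hi, hxb⟩

end List

open List

theorem avoids132_iff {w : List ℕ} :
    Avoids132 w ↔ ∀ a b c : ℕ, [a, b, c] <+ w → ¬(a < c ∧ c < b) := by
  constructor
  · rintro hav a b c habc ⟨hac, hcb⟩
    obtain ⟨is, his, hpw⟩ := sublist_eq_map_getElem habc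
    match is, his, hpw with
    | [i, j, k], his, hpw =>
      simp only [map_cons, map_nil, cons.injEq, and_true] at his
      obtain ⟨rfl, rfl, rfl⟩ := his
      simp only [pairwise_cons, mem_cons, forall_eq_or_imp, not_mem_nil] at hpw
      refine hav ⟨i, j, k, hpw.1.1, hpw.2.1.1, k.2, ?_⟩
      simpa only [getD_eq_getElem _ _ i.2, getD_eq_getElem _ _ j.2, getD_eq_getElem _ _ k.2,
        Fin.getElem_fin] using And.intro hac hcb
  · rintro hav ⟨i, j, k, hij, hjk, hk, hik, hkj⟩
    simp only [getD_eq_getElem _ _ (show i < w.length by omega),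
      getD_eq_getElem _ _ (show j < w.length by omega), getD_eq_getElem _ _ hk] at hik hkj
    refine hav _ _ _ ?_ ⟨hik, hkj⟩
    exact map_getElem_sublist (is := [⟨i, by omega⟩, ⟨j, by omega⟩, ⟨k, hk⟩])
      (by simp [Fin.mk_lt_mk, hij, hjk, hij.trans hjk])

theorem isNonCrossing_iff {π : List (List ℕ)} :
    IsNonCrossing π ↔ ∀ a b c d : ℕ, a < b → b < c → c < d →
      ∀ (i j : ℕ) (hi : i < π.length) (hj : j < π.length), i ≠ j →
        ¬(a ∈ π[i] ∧ c ∈ π[i] ∧ b ∈ π[j] ∧ d ∈ π[j]) := by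
  simp +contextual only [IsNonCrossing, getD_eq_getElem]

theorem IsCanonicalPart.exists_lt {π : List (List ℕ)} (h : IsCanonicalPart π) {i j : ℕ}
    (hij : i < j) (hj : j < π.length) : ∃ y ∈ π[j], ∀ x ∈ π[i], y < x := by
  let R : List ℕ → List ℕ → Prop := fun b b' => ∃ y ∈ b', ∀ x ∈ b, y < x
  have : Trans R R R :=
    ⟨fun ⟨y, hy, hlt⟩ ⟨z, hz, hlt'⟩ => ⟨z, hz, fun x hx => (hlt' y hy).trans (hlt x hx)⟩⟩
  exact pairwise_iff_getElem.1 (isChain_iff_pairwise.1 h) i j (by omega) hj hij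

theorem IsNCCP.pairwise_lt {n : ℕ} {π : List (List ℕ)} (h : IsNCCP n π) :
    ∀ b ∈ π, b.Pairwise (· < ·) :=
  fun b hb => (h.2.1 b hb).2

section

variable {π : List (List ℕ)}

theorem avoids132_flatten (hs : ∀ b ∈ π, b.Pairwise (· < ·)) (hnd : π.flatten.Nodup)
    (hnc : IsNonCrossing π) (hcan : IsCanonicalPart π) : Avoids132 π.flatten := by
  rw [avoids132_iff]
  rintro a b c habc ⟨hac, hcb⟩
  obtain ⟨i, hi, ha⟩ := exists_mem_getElem_of_mem_flatten (habc.subset (by simp : a ∈ [a, b, c]))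
  obtain ⟨j, hj, hb⟩ := exists_mem_getElem_of_mem_flatten (habc.subset (by simp : b ∈ [a, b, c]))
  obtain ⟨k, hk, hc⟩ := exists_mem_getElem_of_mem_flatten (habc.subset (by simp : c ∈ [a, b, c]))
  have hij := (pair_sublist_flatten_iff hs hnd hi hj ha hb).1
    ((((nil_sublist [c]).cons_cons b).cons_cons a).trans habc)
  have hjk : j < k := by
    rcases (pair_sublist_flatten_iff hs hnd hj hk hb hc).1 (((Sublist.refl _).cons a).trans habc)
      with hjk | ⟨-, hbc⟩
    exacts [hjk, absurd hbc hcb.asymm]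
  obtain ⟨z, hz, hza⟩ : ∃ z ∈ π[j], z ≤ a := by
    rcases hij with hij | ⟨rfl, -⟩
    · obtain ⟨z, hz, hlt⟩ := hcan.exists_lt hij hj
      exact ⟨z, hz, (hlt a ha).le⟩
    · exact ⟨a, ha, le_rfl⟩
  obtain ⟨y, hy, hyz⟩ := hcan.exists_lt hjk hk
  exact isNonCrossing_iff.1 hnc y z c b (hyz z hz) (by omega) hcb k j hk hj (by omega)
    ⟨hy, hc, hz, hb⟩

theorem isNonCrossing_of_avoids132 (hs : ∀ b ∈ π, b.Pairwise (· < ·)) (hnd : π.flatten.Nodup)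
    (hav : Avoids132 π.flatten) : IsNonCrossing π := by
  rw [avoids132_iff] at hav
  rw [isNonCrossing_iff]
  rintro a b c d hab hbc hcd i j hi hj hij ⟨ha, hc, hb, hd⟩
  rcases lt_or_gt_of_ne hij with hij | hji
  · refine hav a c b (hnd.triple_sublist ?_ ?_) ⟨hab, hbc⟩
    exacts [(pair_sublist_flatten_iff hs hnd hi hi ha hc).2 (.inr ⟨rfl, hab.trans hbc⟩),
      (pair_sublist_flatten_iff hs hnd hi hj hc hb).2 (.inl hij)]
  · refine hav b d c (hnd.triple_sublist ?_ ?_) ⟨hbc, hcd⟩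
    exacts [(pair_sublist_flatten_iff hs hnd hj hj hb hd).2 (.inr ⟨rfl, hbc.trans hcd⟩),
      (pair_sublist_flatten_iff hs hnd hj hi hd hc).2 (.inl hji)]

theorem isCanonicalPart_of_avoids132 (hs : ∀ b ∈ π, b.Pairwise (· < ·)) (hnd : π.flatten.Nodup)
    (hchain : π.IsChain (fun b b' => ∃ x ∈ b, ∃ y ∈ b', y < x)) (hav : Avoids132 π.flatten) :
    IsCanonicalPart π := by
  rw [avoids132_iff] at hav
  refine isChain_iff_getElem.2 fun l hl => ?_
  obtain ⟨x₁, hx₁, y, hy, hyx₁⟩ := isChain_iff_getElem.1 hchain l hl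
  refine ⟨y, hy, fun x₀ hx₀ => ?_⟩
  by_contra! hx₀y
  have hl' : l < π.length := Nat.lt_of_succ_lt hl
  have hne : x₀ ≠ y := by
    rintro rfl
    exact nodup_iff_sublist.1 hnd x₀ ((pair_sublist_flatten_iff hs hnd hl' hl hx₀ hy).2
      (.inl l.lt_succ_self))
  have hx₀x₁ : x₀ < x₁ := (lt_of_le_of_ne hx₀y hne).trans hyx₁
  refine hav x₀ x₁ y (hnd.triple_sublist ?_ ?_) ⟨lt_of_le_of_ne hx₀y hne, hyx₁⟩
  exacts [(pair_sublist_flatten_iff hs hnd hl' hl' hx₀ hx₁).2 (.inr ⟨rfl, hx₀x₁⟩),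
    (pair_sublist_flatten_iff hs hnd hl' hl hx₁ hy).2 (.inl l.lt_succ_self)]

end


/-- `NCP(n)` equals the set `NCCP(n;132)` of 132-avoiding noncommutative crossing
partitions of `[n]`. -/
theorem ncp_eq_nccp132 (n : ℕ) :
    {π : List (List ℕ) | IsNCCP n π ∧ IsNonCrossing π ∧ IsCanonicalPart π} =
    {π : List (List ℕ) | IsNCCP n π ∧ Avoids132 π.flatten} := by
  ext π
  constructor
  · rintro ⟨hπ, hnc, hcan⟩
    exact ⟨hπ, avoids132_flatten hπ.pairwise_lt hπ.nodup_flatten hnc hcan⟩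
  · rintro ⟨hπ, hav⟩
    exact ⟨hπ, isNonCrossing_of_avoids132 hπ.pairwise_lt hπ.nodup_flatten hav,
      isCanonicalPart_of_avoids132 hπ.pairwise_lt hπ.nodup_flatten hπ.2.2 hav⟩
end

section
/- The sum over all weakly increasing sequences a = (a₁,...,a_{n−1}) with 1 ≤ a_i ≤ i of the product ∏_{i=1}^{n−1} (i+1−a_i) equals (2n−3)!! = ∏_{j=0}^{n−2}(2j+1). -/
open Finset

/-- Recursive count: sum over monotone sequences of length `m` with lower bound `t`,
upper bounds `a i ≤ i + c + 1`, weight `∏ (i + c + 2 - a i)`. -/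
def Fc : ℕ → ℕ → ℕ → ℕ
  | 0, _, _ => 1
  | (m+1), c, t => ∑ v ∈ Finset.Icc t (c+1), (c + 2 - v) * Fc m (c+1) v

/-- hockey-stick style identity. -/
lemma aux_sum (k D : ℕ) :
    ∑ u ∈ Finset.Icc 1 (D+1), u * Nat.choose (k+u) u = (k+1) * Nat.choose (k+D+2) D := by
  have h1 : ∀ u ∈ Finset.Icc 1 (D+1), u * Nat.choose (k+u) u
      = (k+1) * Nat.choose (k+u) (k+1) := by
    intro u hu
    simp only [Finset.mem_Icc] at hu
    obtain ⟨h1, h2⟩ := hu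
    obtain ⟨w, rfl⟩ : ∃ w, u = w + 1 := ⟨u - 1, by omega⟩
    have h3 := Nat.choose_succ_right_eq (k + (w+1)) w
    have hsymm : Nat.choose (k + (w+1)) w = Nat.choose (k + (w+1)) (k+1) := by
      have h4 := Nat.choose_symm (n := k + (w+1)) (k := w) (by omega)
      rw [show k + (w+1) - w = k + 1 by omega] at h4
      exact h4.symm
    rw [show k + (w + 1) - w = k + 1 by omega] at h3
    rw [mul_comm, h3, hsymm, mul_comm]
  rw [Finset.sum_congr rfl h1, ← Finset.mul_sum]
  congr 1
  have hre : ∑ u ∈ Finset.Icc 1 (D+1), Nat.choose (k+u) (k+1)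
      = ∑ i ∈ Finset.Icc (k+1) (k+D+1), Nat.choose i (k+1) := by
    refine Finset.sum_nbij' (i := fun u => k + u) (j := fun i => i - k) ?_ ?_ ?_ ?_ ?_
    · intro a ha; simp only [Finset.mem_Icc] at *; omega
    · intro a ha; simp only [Finset.mem_Icc] at *; omega
    · intro a ha; simp only [Finset.mem_Icc] at *; omega
    · intro a ha; simp only [Finset.mem_Icc] at ha
      show k + (a - k) = a
      omega
    · intro a ha; rfl
  rw [hre, Nat.sum_Icc_choose]
  have h5 := Nat.choose_symm (n := k+D+2) (k := D) (by omega)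
  rw [show k+D+2-D = k+2 by omega] at h5
  rw [show k+D+1+1 = k+D+2 by ring, show k+1+1 = k+2 by ring, h5]

/-- Closed form for `Fc`. -/
lemma Fc_closed : ∀ m c t, t ≤ c + 1 →
    Fc m c t = (∏ j ∈ Finset.range m, (2*j+1)) * Nat.choose (2*m + (c+1-t)) (c+1-t) := by
  intro m
  induction m with
  | zero => intro c t ht; simp [Fc]
  | succ m ih =>
    intro c t ht
    rw [Fc]
    have step : ∀ v ∈ Finset.Icc t (c+1), (c + 2 - v) * Fc m (c+1) v
        = (∏ j ∈ Finset.range m, (2*j+1)) * ((c+2-v) * Nat.choose (2*m + (c+2-v)) (c+2-v)) := by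
      intro v hv
      simp only [Finset.mem_Icc] at hv
      rw [ih (c+1) v (by omega), show (c+1)+1-v = c+2-v by omega]
      ring
    rw [Finset.sum_congr rfl step, ← Finset.mul_sum]
    have hre : ∑ v ∈ Finset.Icc t (c+1), (c+2-v) * Nat.choose (2*m + (c+2-v)) (c+2-v)
        = ∑ u ∈ Finset.Icc 1 ((c+1-t)+1), u * Nat.choose (2*m + u) u := by
      refine Finset.sum_nbij' (i := fun v => c + 2 - v) (j := fun u => c + 2 - u) ?_ ?_ ?_ ?_ ?_
      · intro a ha; simp only [Finset.mem_Icc] at *; omega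
      · intro a ha; simp only [Finset.mem_Icc] at *; omega
      · intro a ha; simp only [Finset.mem_Icc] at *; omega
      · intro a ha; simp only [Finset.mem_Icc] at *; omega
      · intro a ha; rfl
    rw [hre, aux_sum]
    rw [Finset.prod_range_succ]
    rw [show 2*m + (c+1-t) + 2 = 2*(m+1) + (c+1-t) by ring]
    ring

/-- The finite set of admissible sequences. -/
def Ac (m c t : ℕ) : Finset (Fin m → ℕ) :=
  (Fintype.piFinset (fun i : Fin m => Finset.Icc t ((i : ℕ) + c + 1))).filter
    (fun a => ∀ i j : Fin m, i ≤ j → a i ≤ a j)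

lemma mem_Ac {m c t : ℕ} {a : Fin m → ℕ} :
    a ∈ Ac m c t ↔ (∀ i : Fin m, t ≤ a i ∧ a i ≤ (i : ℕ) + c + 1) ∧ Monotone a := by
  simp only [Ac, Finset.mem_filter, Fintype.mem_piFinset, Finset.mem_Icc]
  constructor
  · rintro ⟨h1, h2⟩
    exact ⟨h1, fun i j hij => h2 i j hij⟩
  · rintro ⟨h1, h2⟩
    exact ⟨h1, fun i j hij => h2 hij⟩

lemma sum_Ac : ∀ m c t, (∑ a ∈ Ac m c t, ∏ i : Fin m, ((i : ℕ) + c + 2 - a i)) = Fc m c t := by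
  intro m
  induction m with
  | zero =>
    intro c t
    have h0 : Ac 0 c t = {fun i => (i : Fin 0).elim0} := by
      ext a
      simp only [mem_Ac, Finset.mem_singleton]
      constructor
      · intro _; funext i; exact i.elim0
      · intro _; exact ⟨fun i => i.elim0, fun i j _ => (i.elim0 : _)⟩
    rw [h0, Finset.sum_singleton]
    simp [Fc]
  | succ m ih =>
    intro c t
    rw [Fc]
    have key : (∑ a ∈ Ac (m+1) c t, ∏ i : Fin (m+1), ((i : ℕ) + c + 2 - a i))
        = ∑ p ∈ (Finset.Icc t (c+1)).sigma (fun v => Ac m (c+1) v),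
            (c + 2 - p.1) * ∏ i : Fin m, ((i : ℕ) + (c+1) + 2 - p.2 i) := by
      refine Finset.sum_nbij' (i := fun a => (⟨a 0, Fin.tail a⟩ : Σ _ : ℕ, Fin m → ℕ))
        (j := fun p => Fin.cons p.1 p.2) ?_ ?_ ?_ ?_ ?_
      · intro a ha
        rw [mem_Ac] at ha
        obtain ⟨hb, hm⟩ := ha
        simp only [Finset.mem_sigma, Finset.mem_Icc, mem_Ac]
        refine ⟨⟨(hb 0).1, by simpa using (hb 0).2⟩,
          ⟨fun i => ?_, fun i j hij => hm (by simpa using hij)⟩⟩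
        constructor
        · exact hm (Fin.zero_le _)
        · have := (hb i.succ).2
          simp only [Fin.val_succ] at this
          unfold Fin.tail
          omega
      · intro p hp
        simp only [Finset.mem_sigma, Finset.mem_Icc, mem_Ac] at hp
        obtain ⟨⟨ht1, ht2⟩, hb, hm⟩ := hp
        rw [mem_Ac]
        constructor
        · intro i
          refine Fin.cases ?_ ?_ i
          · simp only [Fin.cons_zero, Fin.val_zero]
            exact ⟨ht1, by omega⟩
          · intro j
            simp only [Fin.cons_succ, Fin.val_succ]
            have := hb j
            omega
        · intro i j
          refine Fin.cases ?_ ?_ i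
          · refine Fin.cases ?_ ?_ j
            · intro _; exact le_rfl
            · intro j' _
              simp only [Fin.cons_zero, Fin.cons_succ]
              exact (hb j').1
          · intro i'
            refine Fin.cases ?_ ?_ j
            · intro h
              simp [Fin.le_def] at h
            · intro j' h
              simp only [Fin.cons_succ]
              exact hm (by rwa [Fin.succ_le_succ_iff] at h)
      · intro a _; exact Fin.cons_self_tail a
      · intro p _; simp
      · intro a _
        rw [Fin.prod_univ_succ]
        congr 1
        · simp
        · apply Finset.prod_congr rfl
          intro i _
          simp only [Fin.val_succ, Fin.tail]
          congr 1
          omega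
    rw [key, Finset.sum_sigma]
    apply Finset.sum_congr rfl
    intro v _
    rw [← ih (c+1) v, Finset.mul_sum]

/-- The sum over weakly increasing sequences `a = (a₁,...,a_{n-1})` with `1 ≤ a_i ≤ i`
of `∏_{i=1}^{n-1} (i + 1 - a_i)` equals `(2n-3)!! = ∏_{j=0}^{n-2} (2j+1)`.
(Indices are 0-based: position `i : Fin (n-1)` corresponds to index `i + 1`.) -/
theorem sum_prod_eq_doubleFactorial (n : ℕ) (hn : 1 ≤ n) :
    (∑ᶠ a ∈ {a : Fin (n - 1) → ℕ |
        (∀ i : Fin (n - 1), 1 ≤ a i ∧ a i ≤ (i : ℕ) + 1) ∧ Monotone a},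
      ∏ i : Fin (n - 1), ((i : ℕ) + 2 - a i))
    = ∏ j ∈ Finset.range (n - 1), (2 * j + 1) := by
  have hset : {a : Fin (n - 1) → ℕ |
        (∀ i : Fin (n - 1), 1 ≤ a i ∧ a i ≤ (i : ℕ) + 1) ∧ Monotone a}
      = ↑(Ac (n-1) 0 1) := by
    ext a
    simp only [Set.mem_setOf_eq, Finset.mem_coe, mem_Ac]
  rw [hset, finsum_mem_coe_finset]
  have hconv : (∑ a ∈ Ac (n-1) 0 1, ∏ i : Fin (n-1), ((i : ℕ) + 2 - a i))
      = ∑ a ∈ Ac (n-1) 0 1, ∏ i : Fin (n-1), ((i : ℕ) + 0 + 2 - a i) := by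
    apply Finset.sum_congr rfl; intro a _
    apply Finset.prod_congr rfl; intro i _
    norm_num
  have hfc := Fc_closed (n-1) 0 1 (Nat.le_refl 1)
  rw [hconv, sum_Ac, hfc]
  simp
end

section
/- The number of labeled parking functions of size n is (n!)², and moreover the bivariate generating function Σ p^{a₁+···+a_n−n} q^{inv(b)} over labeled parking functions (a,b) equals ∏_{i=1}^n [(1−p^i)(1−q^i)]/[(1−p)(1−q)]. -/
/-- A parking function of size `n`: a sequence in `[n]^n` whose weakly increasing
rearrangement `ã` satisfies `ã_i ≤ i`. -/
def IsParking (n : ℕ) (a : List ℕ) : Prop :=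
  a.length = n ∧ (∀ x ∈ a, 1 ≤ x ∧ x ≤ n) ∧
  ∃ b : List ℕ, b.Perm a ∧ b.Pairwise (· ≤ ·) ∧ ∀ i < n, b.getD i 0 ≤ i + 1

/-- A labeled parking function of size `n`: a pair `(a, b)` where `a` is a parking
function, `b` is a permutation of `[n]`, and `a_i ≤ b_i` for all `i`. -/
def IsLabeledParking (n : ℕ) (ab : List ℕ × List ℕ) : Prop :=
  IsParking n ab.1 ∧ ab.2.Perm (List.range' 1 n) ∧
  ∀ i < n, ab.1.getD i 0 ≤ ab.2.getD i 0

/-- The number of inversions of a word. -/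
def invCount (b : List ℕ) : ℕ :=
  ((Finset.range b.length ×ˢ Finset.range b.length).filter
     (fun p => p.1 < p.2 ∧ b.getD p.2 0 < b.getD p.1 0)).card

/-!
If `b` is a permutation of `[n]` and `1 ≤ aᵢ ≤ bᵢ`, then for every `c ≤ n` at least `c` of the
`aᵢ` are `≤ c` (because exactly `c` of the `bᵢ` are), so `a` is automatically a parking
function. Labeled parking functions are therefore the pairs `(a, b)` with `b` a permutation of
`[n]` and `a` a section of the intervals `[1, bᵢ]`. For fixed `b` the `p`-weights of these
sections factor as `∏ᵢ [bᵢ]_p = [n]_p!`, where `[m]_p = 1 + p + ⋯ + p^(m-1)`. Building `b` by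
inserting the letters `n, n-1, …, 1` one at a time, each new letter is the smallest so far, so
inserting it at position `i` creates exactly `i` inversions; this gives MacMahon's
`∑_b q^inv(b) = [n]_q!`. At `p = q = 1` the generating function counts the pairs.
-/

open List

variable {R : Type*} [CommSemiring R]

@[to_additive]
lemma prod_map_range_eq_prod_range {M : Type*} [CommMonoid M] (f : ℕ → M) (n : ℕ) :
    ((range n).map f).prod = ∏ i ∈ Finset.range n, f i :=
  rfl

@[to_additive]
lemma prod_map_range'_eq_prod_range {M : Type*} [CommMonoid M] (f : ℕ → M) (n : ℕ) :
    ((range' 1 n).map f).prod = ∏ i ∈ Finset.range n, f (i + 1) := by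
  simp [range'_eq_map_range, prod_map_range_eq_prod_range, add_comm]

section Inversions

lemma countP_eq_sum_range (P : ℕ → Prop) [DecidablePred P] (l : List ℕ) :
    l.countP (P ·) = ∑ i ∈ Finset.range l.length, if P (l.getD i 0) then 1 else 0 := by
  induction l with
  | nil => simp
  | cons y l ih =>
    rw [length_cons, Finset.sum_range_succ', countP_cons, ih]
    simp

lemma invCount_eq_sum (b : List ℕ) :
    invCount b = ∑ i ∈ Finset.range b.length, ∑ j ∈ Finset.range b.length,
      if i < j ∧ b.getD j 0 < b.getD i 0 then 1 else 0 := by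
  rw [invCount, Finset.card_filter, Finset.sum_product]

lemma invCount_cons (x : ℕ) (l : List ℕ) :
    invCount (x :: l) = l.countP (· < x) + invCount l := by
  rw [countP_eq_sum_range (· < x)]
  simp only [invCount_eq_sum, length_cons, Finset.sum_range_succ', getD_cons_succ, getD_cons_zero]
  simp [add_comm]

lemma invCount_insertIdx {x : ℕ} : ∀ {b : List ℕ} {i : ℕ}, i ≤ b.length → (∀ y ∈ b, x < y) →
    invCount (b.insertIdx i x) = invCount b + i
  | b, 0, _, hx => by
    rw [insertIdx_zero, invCount_cons, countP_eq_zero.2 fun y hy => by simpa using (hx y hy).le]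
    simp
  | y :: b, i + 1, hi, hx => by
    have hib : i ≤ b.length := by simpa using hi
    rw [insertIdx_succ_cons, invCount_cons, invCount_cons, (perm_insertIdx x b hib).countP_eq,
      countP_cons_of_pos (by simpa using hx y mem_cons_self),
      invCount_insertIdx hib fun z hz => hx z (mem_cons_of_mem y hz)]
    ring

end Inversions

section Mahonian

lemma permutations'Aux_eq_map_insertIdx {α : Type*} (x : α) (s : List α) :
    permutations'Aux x s = (range (s.length + 1)).map (s.insertIdx · x) :=
  ext_getElem (by simp [length_permutations'Aux]) fun i _ _ => by
    simp [getElem_permutations'Aux]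

lemma sum_permutations'Aux_pow_invCount (q : R) {x : ℕ} {b : List ℕ} (hx : ∀ y ∈ b, x < y) :
    ((permutations'Aux x b).map (q ^ invCount ·)).sum
      = (∑ t ∈ Finset.range (b.length + 1), q ^ t) * q ^ invCount b := by
  rw [permutations'Aux_eq_map_insertIdx, map_map, Finset.sum_mul, ← sum_map_range_eq_sum_range]
  congr 1
  refine map_congr_left fun i hi => ?_
  rw [Function.comp_apply, invCount_insertIdx (by simpa [Nat.lt_succ_iff] using hi) hx, pow_add,
    mul_comm]

lemma nodup_permutations' {α : Type*} {l : List α} (hl : l.Nodup) : l.permutations'.Nodup :=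
  (permutations_perm_permutations' l).nodup_iff.1 (nodup_permutations l hl)

theorem sum_permutations'_pow_invCount (q : R) :
    ∀ {l : List ℕ}, l.Pairwise (· < ·) →
      ((permutations' l).map (q ^ invCount ·)).sum
        = ∏ i ∈ Finset.range l.length, ∑ t ∈ Finset.range (i + 1), q ^ t
  | [], _ => by simp [invCount]
  | x :: l, hl => by
    rw [pairwise_cons] at hl
    have hinsert : ∀ b ∈ permutations' l, ((permutations'Aux x b).map (q ^ invCount ·)).sum
        = (∑ t ∈ Finset.range (l.length + 1), q ^ t) * q ^ invCount b := fun b hb => by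
      have hbl : b ~ l := mem_permutations'.1 hb
      rw [sum_permutations'Aux_pow_invCount q fun y hy => hl.1 y (hbl.subset hy), hbl.length_eq]
    rw [permutations', flatMap_def, map_flatten, sum_flatten, map_map, length_cons,
      Finset.prod_range_succ, ← sum_permutations'_pow_invCount q hl.2, map_map]
    simp only [Function.comp_def]
    rw [map_congr_left hinsert, sum_map_mul_left, mul_comm]

end Mahonian

section Sections

lemma nodup_sections {α : Type*} :
    ∀ {L : List (List α)}, (∀ l ∈ L, l.Nodup) → L.sections.Nodup
  | [], _ => by simp [sections]
  | l :: L, h => by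
    rw [sections, nodup_flatMap]
    refine ⟨fun s _ => (h l mem_cons_self).map fun a b hab => (cons.inj hab).1, ?_⟩
    refine (nodup_sections fun l' hl' => h l' (mem_cons_of_mem l hl')).pairwise_of_forall_ne
      fun s _ s' _ hss' => ?_
    simp only [Function.onFun, List.Disjoint, mem_map]
    rintro _ ⟨a, -, rfl⟩ ⟨a', -, h'⟩
    exact hss' (cons.inj h').2.symm

lemma sum_map_prod_sections {α : Type*} (f : α → R) :
    ∀ L : List (List α),
      ((sections L).map fun s => (s.map f).prod).sum = (L.map fun l => (l.map f).sum).prod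
  | [] => by simp [sections]
  | l :: L => by
    simp [sections, flatMap_def, sum_flatten, Function.comp_def, sum_map_mul_right,
      sum_map_mul_left, ← sum_map_prod_sections f L]

lemma mem_sections_map_range'_iff {a b : List ℕ} :
    a ∈ (b.map (range' 1)).sections ↔ Forall₂ (fun v m => 1 ≤ v ∧ v ≤ m) a b := by
  simp only [mem_sections, forall₂_map_right_iff, mem_range'_1, Nat.lt_one_add_iff]

lemma prod_map_pow_sub_one {M : Type*} [Monoid M] (p : M) :
    ∀ {a : List ℕ}, (∀ v ∈ a, 1 ≤ v) → (a.map fun v => p ^ (v - 1)).prod = p ^ (a.sum - a.length)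
  | [], _ => by simp
  | v :: a, ha => by
    have hsum := length_le_sum_of_one_le a fun w hw => ha w (mem_cons_of_mem v hw)
    rw [map_cons, prod_cons, prod_map_pow_sub_one p fun w hw => ha w (mem_cons_of_mem v hw),
      ← pow_add, sum_cons, length_cons]
    have hv := ha v mem_cons_self
    congr 1
    omega

lemma sum_sections_map_range'_pow (p : R) (b : List ℕ) :
    ((b.map (range' 1)).sections.map fun a => p ^ (a.sum - a.length)).sum
      = (b.map fun m => ∑ t ∈ Finset.range m, p ^ t).prod := by
  have hpos : ∀ a ∈ (b.map (range' 1)).sections, ∀ v ∈ a, 1 ≤ v := fun a ha =>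
    ((forall₂_and_left _ _).1 (mem_sections_map_range'_iff.1 ha)).1
  rw [← map_congr_left fun a ha => prod_map_pow_sub_one p (hpos a ha), sum_map_prod_sections,
    map_map]
  simp [Function.comp_def, sum_map_range'_eq_sum_range]

lemma sum_sections_pow_of_perm (p : R) {n : ℕ} {b : List ℕ} (hb : b ~ range' 1 n) :
    ∑ a ∈ (b.map (range' 1)).sections.toFinset, p ^ (a.sum - n)
      = ∏ i ∈ Finset.range n, ∑ t ∈ Finset.range (i + 1), p ^ t :=
  calc ∑ a ∈ (b.map (range' 1)).sections.toFinset, p ^ (a.sum - n)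
      = ∑ a ∈ (b.map (range' 1)).sections.toFinset, p ^ (a.sum - a.length) :=
        Finset.sum_congr rfl fun a ha => by
          rw [mem_sections_length (mem_toFinset.1 ha), length_map, hb.length_eq, length_range']
    _ = (b.map fun m => ∑ t ∈ Finset.range m, p ^ t).prod := by
        rw [sum_toFinset _ (nodup_sections (by simp [nodup_range'])),
          sum_sections_map_range'_pow]
    _ = _ := by rw [(hb.map _).prod_eq, prod_map_range'_eq_prod_range]

end Sections

section Parking

lemma countP_le_countP_of_forall₂_le {α : Type*} [Preorder α] [DecidableLE α] {a b : List α}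
    (h : Forall₂ (· ≤ ·) a b) (c : α) : b.countP (· ≤ c) ≤ a.countP (· ≤ c) := by
  induction h with
  | nil => simp
  | @cons x y a b hxy _ ih =>
    simp only [countP_cons, decide_eq_true_eq]
    by_cases hy : y ≤ c
    · simp [hy, hxy.trans hy, ih]
    · simp only [hy, if_false]
      omega

lemma countP_le_range'_one_eq_min (c n : ℕ) : (range' 1 n).countP (· ≤ c) = min c n := by
  induction n with
  | zero => simp
  | succ n ih =>
    rw [range'_1_concat, countP_append, ih]
    by_cases h : 1 + n ≤ c <;> simp [h] <;> omega

lemma getD_le_of_lt_countP {c : ℕ} : ∀ {s : List ℕ}, s.Pairwise (· ≤ ·) → ∀ {i : ℕ},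
    i < s.countP (· ≤ c) → s.getD i 0 ≤ c
  | x :: s, hs, 0, hi => by
    obtain ⟨y, hy, hyc⟩ := countP_pos_iff.1 (Nat.zero_lt_of_lt hi)
    rcases mem_cons.1 hy with rfl | hy
    · simpa using hyc
    · simpa using ((pairwise_cons.1 hs).1 y hy).trans (by simpa using hyc)
  | x :: s, hs, i + 1, hi => by
    rw [countP_cons] at hi
    simpa using getD_le_of_lt_countP (pairwise_cons.1 hs).2 (by split at hi <;> omega)

lemma isParking_of_forall₂_le {n : ℕ} {a b : List ℕ} (hb : b ~ range' 1 n)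
    (hab : Forall₂ (· ≤ ·) a b) (hpos : ∀ v ∈ a, 1 ≤ v) : IsParking n a := by
  have hlen : a.length = n := by rw [hab.length_eq, hb.length_eq, length_range']
  have hcount (c : ℕ) : min c n ≤ a.countP (· ≤ c) := by
    rw [← countP_le_range'_one_eq_min, ← hb.countP_eq]
    exact countP_le_countP_of_forall₂_le hab c
  have hle : ∀ v ∈ a, v ≤ n := by
    have h := hcount n
    rw [min_self] at h
    simpa using countP_eq_length.1 (le_antisymm (countP_le_length (p := (· ≤ n)) (l := a))
      (by omega))
  refine ⟨hlen, fun v hv => ⟨hpos v hv, hle v hv⟩, a.insertionSort (· ≤ ·),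
    perm_insertionSort _ _, pairwise_insertionSort _ _, fun i hi => ?_⟩
  refine getD_le_of_lt_countP (pairwise_insertionSort _ _) ?_
  rw [(perm_insertionSort _ _).countP_eq]
  have := hcount (i + 1)
  omega

lemma isLabeledParking_iff {n : ℕ} {a b : List ℕ} :
    IsLabeledParking n (a, b) ↔ b ~ range' 1 n ∧ Forall₂ (fun v m => 1 ≤ v ∧ v ≤ m) a b := by
  rw [forall₂_and_left]
  constructor
  · rintro ⟨⟨hlen, hbound, -⟩, hb, hdom⟩
    have hblen : b.length = n := by rw [hb.length_eq, length_range']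
    refine ⟨hb, fun v hv => (hbound v hv).1, forall₂_iff_get.2 ⟨hlen.trans hblen.symm, ?_⟩⟩
    intro i hi _
    simpa [getD_eq_getElem, hi, hblen ▸ hlen ▸ hi] using hdom i (hlen ▸ hi)
  · rintro ⟨hb, hpos, hab⟩
    refine ⟨isParking_of_forall₂_le hb hab hpos, hb, fun i hi => ?_⟩
    have hia : i < a.length := by rw [hab.length_eq, hb.length_eq, length_range']; exact hi
    dsimp only
    rw [getD_eq_getElem _ _ hia, getD_eq_getElem _ _ (hab.length_eq ▸ hia)]
    exact (forall₂_iff_get.1 hab).2 i _ _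

end Parking

def labeledParkingFinset (n : ℕ) : Finset (List ℕ × List ℕ) :=
  (range' 1 n).permutations'.toFinset.biUnion fun b =>
    (b.map (range' 1)).sections.toFinset.image (·, b)

lemma mem_labeledParkingFinset {n : ℕ} {ab : List ℕ × List ℕ} :
    ab ∈ labeledParkingFinset n ↔
      ab.2 ∈ (range' 1 n).permutations'.toFinset ∧
        ab.1 ∈ (ab.2.map (range' 1)).sections.toFinset := by
  obtain ⟨a, b⟩ := ab
  simp [labeledParkingFinset]

lemma coe_labeledParkingFinset (n : ℕ) :
    (labeledParkingFinset n : Set (List ℕ × List ℕ)) = {ab | IsLabeledParking n ab} := by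
  ext ⟨a, b⟩
  simp [mem_labeledParkingFinset, isLabeledParking_iff, mem_permutations',
    mem_sections_map_range'_iff]

theorem sum_labeledParkingFinset (n : ℕ) (p q : R) :
    ∑ ab ∈ labeledParkingFinset n, p ^ (ab.1.sum - n) * q ^ invCount ab.2
      = ∏ i ∈ Finset.range n,
          (∑ t ∈ Finset.range (i + 1), p ^ t) * ∑ t ∈ Finset.range (i + 1), q ^ t := by
  rw [Finset.sum_finset_product_right _ _ (fun b => (b.map (range' 1)).sections.toFinset)
    fun _ => mem_labeledParkingFinset]
  simp_rw [← Finset.sum_mul]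
  rw [Finset.sum_congr rfl fun b hb => by
      rw [sum_sections_pow_of_perm p (mem_permutations'.1 (mem_toFinset.1 hb))],
    ← Finset.mul_sum, sum_toFinset _ (nodup_permutations' nodup_range'),
    sum_permutations'_pow_invCount q (pairwise_lt_range' _), length_range',
    Finset.prod_mul_distrib]

/-- The number of labeled parking functions of size `n` is `(n!)²`, and the bivariate
generating function `Σ p^{a₁+⋯+a_n-n} q^{inv(b)}` over labeled parking functions equals
`∏_{i=1}^{n} (1-p^i)(1-q^i)/((1-p)(1-q))`, written with geometric sums
`(1-p^i)/(1-p) = Σ_{t<i} p^t`. -/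
theorem labeled_parking (n : ℕ) :
    {ab : List ℕ × List ℕ | IsLabeledParking n ab}.ncard = (Nat.factorial n) ^ 2 ∧
    ∀ p q : ℚ,
      (∑ᶠ ab ∈ {ab : List ℕ × List ℕ | IsLabeledParking n ab},
        p ^ (ab.1.sum - n) * q ^ invCount ab.2)
      = ∏ i ∈ Finset.range n,
          ((∑ t ∈ Finset.range (i + 1), p ^ t) * (∑ t ∈ Finset.range (i + 1), q ^ t)) := by
  rw [← coe_labeledParkingFinset, Set.ncard_coe_finset]
  refine ⟨?_, fun p q => by rw [finsum_mem_coe_finset, sum_labeledParkingFinset]⟩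
  simpa [Finset.prod_mul_distrib, Finset.prod_range_add_one_eq_factorial, sq]
    using sum_labeledParkingFinset n (1 : ℕ) 1
end

section
/- The number of canonical labeled k-ary trees with n nodes (equivalently, unlabeled k-ary trees with n nodes) is the n-th Fuss–Catalan number (1/(kn+1))·C(kn+1, n). -/
/-- `k`-ary trees: each internal node carries a label and a list of children
(ordered left to right, with `leaf` marking absent subtrees). -/
inductive KTree where
  | leaf : KTree
  | node : ℕ → List KTree → KTree

/-- The list of labels of a `k`-ary tree. -/
def KTree.labels : KTree → List ℕ
  | .leaf => []
  | .node x c => x :: (c.attach.map (fun t => KTree.labels t.1)).flatten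
decreasing_by
  have := List.sizeOf_lt_of_mem t.2
  simp only [KTree.node.sizeOf_spec]
  omega

/-- Every internal node has exactly `k` (possibly absent) children,
i.e. each node has at most `k` children, distinguished by positions `1,...,k`. -/
inductive KTree.Arity (k : ℕ) : KTree → Prop
  | leaf : Arity k .leaf
  | node (x : ℕ) (c : List KTree) : c.length = k → (∀ t ∈ c, Arity k t) → Arity k (.node x c)

/-- Labels increase along every root-to-leaf path. -/
inductive KTree.Incr : KTree → Prop
  | leaf : Incr .leaf
  | node (x : ℕ) (c : List KTree) :
      (∀ t ∈ c, ∀ y ∈ KTree.labels t, x < y) →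
      (∀ t ∈ c, Incr t) → Incr (.node x c)

/-- A labeled `k`-ary tree with `n` nodes: labels are exactly `{1,...,n}`,
increasing along root-to-leaf paths. -/
def IsLabeledKTree (k n : ℕ) (t : KTree) : Prop :=
  t.Arity k ∧ t.labels.Perm (List.range' 1 n) ∧ t.Incr

/-- The node labeled `b` is weakly right of the node labeled `a` in a `k`-ary tree:
`b` is a descendant of `a`, or the two nodes branch at a common ancestor with `a`
in a strictly more-left subtree than `b`. -/
inductive KTree.WR : KTree → ℕ → ℕ → Prop
  | desc (x : ℕ) (c : List KTree) (a b : ℕ) :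
      x = a → (∃ t ∈ c, b ∈ KTree.labels t) → WR (.node x c) a b
  | branch (x : ℕ) (c : List KTree) (a b : ℕ) :
      (∃ i j : ℕ, i < j ∧ j < c.length ∧
        a ∈ KTree.labels (c.getD i .leaf) ∧ b ∈ KTree.labels (c.getD j .leaf)) →
      WR (.node x c) a b
  | sub (x : ℕ) (c : List KTree) (a b : ℕ) (t : KTree) :
      t ∈ c → WR t a b → WR (.node x c) a b

/-- A labeled `k`-ary tree is canonical if for every pair of labels `l₁ < l₂`,
the node labeled `l₂` is weakly right of the node labeled `l₁`. -/
def KTree.CanonicalK (t : KTree) : Prop :=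
  ∀ l₁ l₂ : ℕ, l₁ ∈ t.labels → l₂ ∈ t.labels → l₁ < l₂ → t.WR l₁ l₂

/-!
The node labelled `b` is weakly right of the node labelled `a` exactly when `a` comes before `b`
in preorder, so a labelled tree is canonical exactly when its labels read `1, …, n` in preorder,
and canonical trees are the same as tree shapes. A shape is encoded by its preorder word (`true`
for an internal node, `false` for a leaf). Weighing `true` as `k - 1` and `false` as `-1`, these
words are exactly the words of total weight `-1` whose proper prefixes all have nonnegative
weight. By the cycle lemma, each of the `C(kn+1, n)` words with `kn + 1` letters and `n` letters
`true` has exactly one rotation of this kind, and the `kn + 1` rotations of such a word are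
pairwise distinct.
-/

namespace List

variable {α : Type*} {a b : α}

theorem pair_sublist_append_iff {u v : List α} :
    [a, b] <+ u ++ v ↔ [a, b] <+ u ∨ (a ∈ u ∧ b ∈ v) ∨ [a, b] <+ v := by
  simp only [sublist_append_iff, cons_eq_append_iff]
  constructor
  · rintro ⟨l₁, l₂, h, h₁, h₂⟩
    simp only [nil_eq_append_iff] at h
    rcases h with ⟨rfl, rfl⟩ | ⟨_, rfl, ⟨rfl, rfl⟩ | ⟨_, rfl, ⟨rfl, rfl⟩ | ⟨_, rfl, h⟩⟩⟩ <;>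
      simp_all
  · rintro (h | ⟨ha, hb⟩ | h)
    · exact ⟨[a, b], [], by simp, h, nil_sublist _⟩
    · exact ⟨[a], [b], by simp, singleton_sublist.2 ha, singleton_sublist.2 hb⟩
    · exact ⟨[], [a, b], by simp, nil_sublist _, h⟩

theorem pair_sublist_flatten_iff_s19 {L : List (List α)} :
    [a, b] <+ L.flatten ↔ (∃ l ∈ L, [a, b] <+ l) ∨
      ∃ i j, i < j ∧ j < L.length ∧ a ∈ L.getD i [] ∧ b ∈ L.getD j [] := by
  induction L with
  | nil => simp
  | cons u L ih =>
    rw [flatten_cons, pair_sublist_append_iff, ih, mem_flatten]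
    constructor
    · rintro (h | ⟨ha, l, hl, hb⟩ | ⟨l, hl, h⟩ | ⟨i, j, hij, hj, ha, hb⟩)
      · exact .inl ⟨u, mem_cons_self, h⟩
      · obtain ⟨j, hj, rfl⟩ := mem_iff_getElem.1 hl
        exact .inr ⟨0, j + 1, j.succ_pos, by simpa using hj, by simpa using ha,
          by simpa [hj] using hb⟩
      · exact .inl ⟨l, mem_cons_of_mem _ hl, h⟩
      · exact .inr ⟨i + 1, j + 1, by omega, by simpa using hj, by simpa using ha,
          by simpa using hb⟩
    · rintro (⟨l, hl, h⟩ | ⟨i, j, hij, hj, ha, hb⟩)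
      · rcases mem_cons.1 hl with rfl | hl
        · exact .inl h
        · exact .inr (.inr (.inl ⟨l, hl, h⟩))
      · obtain ⟨j, rfl⟩ : ∃ j', j = j' + 1 := ⟨j - 1, by omega⟩
        simp only [length_cons, getD_cons_succ] at hj hb
        rcases i with _ | i
        · refine .inr (.inl ⟨by simpa using ha, L[j], getElem_mem (by omega), ?_⟩)
          rwa [getD_eq_getElem _ _ (by omega)] at hb
        · exact .inr (.inr (.inr ⟨i, j, by omega, by omega, by simpa using ha, hb⟩))

theorem pairwise_lt_iff_forall_pair_sublist [LinearOrder α] {l : List α} (hl : l.Nodup) :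
    l.Pairwise (· < ·) ↔ ∀ a ∈ l, ∀ b ∈ l, a < b → [a, b] <+ l := by
  induction l with
  | nil => simp
  | cons x l ih =>
    obtain ⟨hx, hl⟩ := nodup_cons.1 hl
    rw [pairwise_cons, ih hl]
    constructor
    · rintro ⟨hxl, h⟩ a ha b hb hab
      rcases mem_cons.1 ha, mem_cons.1 hb with ⟨ha | ha, hb | hb⟩
      · exact absurd hab (by rw [ha, hb]; exact lt_irrefl x)
      · exact ha ▸ (singleton_sublist.2 hb).cons_cons x
      · exact absurd (hxl a ha) (hb ▸ hab).not_gt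
      · exact (h a ha b hb hab).cons x
    · intro h
      refine ⟨fun y hy => ?_, fun a ha b hb hab => ?_⟩
      · have hyx : y ≠ x := fun hyx => hx (hyx ▸ hy)
        refine hyx.lt_or_gt.resolve_left fun hyx => hx ?_
        rcases sublist_cons_iff.1 (h y (mem_cons_of_mem x hy) x mem_cons_self hyx) with
          h' | ⟨_, h', -⟩
        · exact h'.subset (by simp)
        · simp_all
      · rcases sublist_cons_iff.1 (h a (mem_cons_of_mem x ha) b (mem_cons_of_mem x hb) hab) with
          h' | ⟨_, h', -⟩
        · exact h'
        · exact absurd (by simp_all) hx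

end List

namespace KTree

theorem labels_leaf : labels .leaf = [] := by
  rw [labels]

theorem labels_node (x : ℕ) (c : List KTree) :
    labels (.node x c) = x :: (c.map labels).flatten := by
  rw [labels, List.map_attach_eq_pmap, List.pmap_eq_map]

@[elab_as_elim]
theorem induction_on {P : KTree → Prop} (t : KTree) (leaf : P .leaf)
    (node : ∀ x c, (∀ t ∈ c, P t) → P (.node x c)) : P t :=
  KTree.rec (motive_1 := P) (motive_2 := fun c => ∀ t ∈ c, P t) leaf node
    (by simp) (fun t c ht hc => by simpa [ht] using hc) t

open List in
theorem wr_iff_pair_sublist_labels {t : KTree} {a b : ℕ} : t.WR a b ↔ [a, b] <+ t.labels := by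
  induction t using induction_on with
  | leaf =>
    simp only [labels_leaf, sublist_nil, reduceCtorEq, iff_false]
    rintro ⟨⟩
  | node x c ih =>
    have hgetD (i : ℕ) : (c.map labels).getD i [] = labels (c.getD i .leaf) := by
      rw [← labels_leaf, getD_map]
    rw [labels_node, sublist_cons_iff, pair_sublist_flatten_iff_s19]
    simp only [hgetD, length_map, mem_map, exists_exists_and_eq_and, cons.injEq]
    constructor
    · rintro (⟨_, _, _, _, rfl, u, hu, hb⟩ | ⟨_, _, _, _, hij⟩ | ⟨_, _, _, _, u, hu, hab⟩)
      · exact .inr ⟨[b], ⟨rfl, rfl⟩,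
          singleton_sublist.2 (mem_flatten.2 ⟨_, mem_map_of_mem hu, hb⟩)⟩
      · exact .inl (.inr hij)
      · exact .inl (.inl ⟨u, hu, (ih u hu).1 hab⟩)
    · rintro ((⟨u, hu, hab⟩ | hij) | ⟨_, ⟨rfl, rfl⟩, hb⟩)
      · exact .sub _ _ _ _ u hu ((ih u hu).2 hab)
      · exact .branch _ _ _ _ hij
      · obtain ⟨_, hl, hbu⟩ := mem_flatten.1 (singleton_sublist.1 hb)
        obtain ⟨u, hu, rfl⟩ := mem_map.1 hl
        exact .desc _ _ _ _ rfl ⟨u, hu, hbu⟩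

theorem incr_of_pairwise_labels {t : KTree} (h : t.labels.Pairwise (· < ·)) : t.Incr := by
  induction t using induction_on with
  | leaf => exact .leaf
  | node x c ih =>
    rw [labels_node, List.pairwise_cons] at h
    refine .node x c (fun u hu y hy => h.1 y ?_) (fun u hu => ih u hu (h.2.sublist ?_))
    · exact List.mem_flatten.2 ⟨_, List.mem_map_of_mem hu, hy⟩
    · exact List.sublist_flatten_of_mem (List.mem_map_of_mem hu)

theorem canonicalK_iff_pairwise_labels {t : KTree} (ht : t.labels.Nodup) :
    t.CanonicalK ↔ t.labels.Pairwise (· < ·) := by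
  rw [List.pairwise_lt_iff_forall_pair_sublist ht]
  simp only [CanonicalK, wr_iff_pair_sublist_labels]
  exact ⟨fun h a ha b hb => h a b ha hb, fun h a b ha hb => h a ha b hb⟩

end KTree

theorem isLabeledKTree_and_canonicalK_iff {k n : ℕ} {t : KTree} :
    IsLabeledKTree k n t ∧ t.CanonicalK ↔ t.Arity k ∧ t.labels = List.range' 1 n := by
  constructor
  · rintro ⟨⟨hk, hperm, -⟩, hc⟩
    rw [KTree.canonicalK_iff_pairwise_labels (hperm.nodup_iff.2 (List.nodup_range' ..))] at hc
    exact ⟨hk, hperm.eq_of_pairwise (fun a b _ _ hab hba => absurd hab hba.not_gt) hc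
      (List.pairwise_lt_range' ..)⟩
  · rintro ⟨hk, hl⟩
    have hsorted : t.labels.Pairwise (· < ·) := hl ▸ List.pairwise_lt_range' ..
    exact ⟨⟨hk, hl ▸ .refl _, KTree.incr_of_pairwise_labels hsorted⟩,
      (KTree.canonicalK_iff_pairwise_labels (hl ▸ List.nodup_range' ..)).2 hsorted⟩

theorem exists_forall_le_of_add_eq_sub_one (f : ℕ → ℤ) (N : ℕ)
    (hf : ∀ i ≤ N, f (N + i) = f i - 1) : ∃ j ≤ N, ∀ L < N, f j ≤ f (j + L) := by
  classical
  obtain ⟨j₀, hj₀, hmin₀⟩ := (Finset.range (N + 1)).exists_min_image f ⟨0, by simp⟩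
  -- start at the first position where `f` attains its minimum on `[0, N]`
  have hex : ∃ j, j ≤ N ∧ ∀ i ≤ N, f j ≤ f i :=
    ⟨j₀, by simpa [Nat.lt_succ_iff] using hj₀,
      fun i hi => hmin₀ i (by simpa [Nat.lt_succ_iff])⟩
  obtain ⟨hjN, hjmin⟩ := Nat.find_spec hex
  have hfirst : ∀ i < Nat.find hex, f (Nat.find hex) < f i := fun i hi => by
    by_contra! h
    exact Nat.find_min hex hi ⟨by omega, fun i' hi' => h.trans (hjmin i' hi')⟩
  refine ⟨Nat.find hex, hjN, fun L hL => ?_⟩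
  by_cases hjL : Nat.find hex + L ≤ N
  · exact hjmin _ hjL
  · obtain ⟨i, hi⟩ : ∃ i, Nat.find hex + L = N + i := ⟨Nat.find hex + L - N, by omega⟩
    rw [hi, hf i (by omega)]
    linarith [hfirst i (by omega)]

def weight (k : ℕ) (w : List Bool) : ℤ := k * w.count true - w.length

def IsFirstPassage (k : ℕ) (w : List Bool) : Prop :=
  weight k w = -1 ∧ ∀ p, p <+: w → p ≠ w → 0 ≤ weight k p

section Weight

variable {k : ℕ}

@[simp] theorem weight_nil : weight k [] = 0 := by simp [weight]

theorem weight_append (u v : List Bool) : weight k (u ++ v) = weight k u + weight k v := by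
  simp only [weight, List.count_append, List.length_append]; push_cast; ring

@[simp] theorem weight_cons_true (w : List Bool) : weight k (true :: w) = k - 1 + weight k w := by
  simp only [weight, List.count_cons_self, List.length_cons]; push_cast; ring

@[simp] theorem weight_cons_false (w : List Bool) : weight k (false :: w) = -1 + weight k w := by
  simp only [weight, List.count_cons, List.length_cons]; simp; ring

theorem neg_length_le_weight (w : List Bool) : -(w.length : ℤ) ≤ weight k w := by
  have : (0 : ℤ) ≤ k * w.count true := by positivity
  simp only [weight]; linarith

theorem weight_perm {w w' : List Bool} (h : w.Perm w') : weight k w = weight k w' := by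
  simp only [weight, h.count_eq, h.length_eq]

theorem isFirstPassage_iff_take {w : List Bool} :
    IsFirstPassage k w ↔ weight k w = -1 ∧ ∀ j < w.length, 0 ≤ weight k (w.take j) := by
  refine and_congr_right fun _ =>
    ⟨fun h j hj => h _ (List.take_prefix j w) ?_, fun h p hp hne => ?_⟩
  · intro he
    have := congrArg List.length he
    simp only [List.length_take] at this
    omega
  · rw [List.prefix_iff_eq_take.1 hp] at hne ⊢
    exact h _ (hp.length_le.lt_of_ne fun he => hne (by rw [he, List.take_length]))

theorem isFirstPassage_false : IsFirstPassage k [false] := by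
  simp [isFirstPassage_iff_take]

theorem IsFirstPassage.eq_of_isPrefix {u v : List Bool} (hu : IsFirstPassage k u)
    (hv : IsFirstPassage k v) (h : u <+: v) : u = v := by
  by_contra hne
  linarith [hv.2 u h hne, hu.1]

theorem weight_flatten {ws : List (List Bool)} (hws : ∀ u ∈ ws, IsFirstPassage k u) :
    weight k ws.flatten = -ws.length := by
  induction ws with
  | nil => simp
  | cons u ws ih =>
    simp only [List.forall_mem_cons] at hws
    rw [List.flatten_cons, weight_append, hws.1.1, ih hws.2, List.length_cons]
    push_cast; ring

theorem one_sub_length_le_weight_of_isPrefix_flatten {ws : List (List Bool)} {p : List Bool}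
    (hws : ∀ u ∈ ws, IsFirstPassage k u) (hp : p <+: ws.flatten) (hne : p ≠ ws.flatten) :
    1 - (ws.length : ℤ) ≤ weight k p := by
  induction ws generalizing p with
  | nil => exact absurd (List.prefix_nil.1 hp) hne
  | cons u ws ih =>
    simp only [List.forall_mem_cons] at hws
    rw [List.flatten_cons] at hp hne
    by_cases hup : u <+: p
    · obtain ⟨p', rfl⟩ := hup
      rw [List.prefix_append_right_inj] at hp
      have := ih hws.2 hp (fun h => hne (h ▸ rfl))
      rw [weight_append, hws.1.1, List.length_cons]; push_cast; linarith
    · have hpu := (List.prefix_or_prefix_of_prefix hp (List.prefix_append u _)).resolve_right hup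
      have := hws.1.2 p hpu (fun h => hup (h ▸ List.prefix_rfl))
      rw [List.length_cons]; push_cast; linarith

theorem IsFirstPassage.cons_flatten {ws : List (List Bool)} (hws : ∀ u ∈ ws, IsFirstPassage k u)
    (hlen : ws.length = k) : IsFirstPassage k (true :: ws.flatten) := by
  refine ⟨by rw [weight_cons_true, weight_flatten hws, hlen]; ring, fun p hp hne => ?_⟩
  rcases List.prefix_cons_iff.1 hp with rfl | ⟨p', rfl, hp'⟩
  · simp
  · have := one_sub_length_le_weight_of_isPrefix_flatten hws hp' (fun h => hne (h ▸ rfl))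
    rw [hlen] at this
    rw [weight_cons_true]; linarith

theorem IsFirstPassage.ne_nil {w : List Bool} (hw : IsFirstPassage k w) : w ≠ [] := by
  rintro rfl
  simpa using hw.1

theorem eq_of_flatten_eq_flatten {ws ws' : List (List Bool)}
    (hws : ∀ u ∈ ws, IsFirstPassage k u) (hws' : ∀ u ∈ ws', IsFirstPassage k u)
    (h : ws.flatten = ws'.flatten) : ws = ws' := by
  induction ws generalizing ws' with
  | nil =>
    cases ws' with
    | nil => rfl
    | cons u' ws' =>
      exact absurd (List.flatten_eq_nil_iff.1 h.symm u' (by simp)) (hws' u' (by simp)).ne_nil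
  | cons u ws ih =>
    cases ws' with
    | nil => exact absurd (List.flatten_eq_nil_iff.1 h u (by simp)) (hws u (by simp)).ne_nil
    | cons u' ws' =>
      simp only [List.forall_mem_cons, List.flatten_cons] at hws hws' h
      have huu' : u = u' := by
        rcases List.prefix_or_prefix_of_prefix (List.prefix_append u _)
          (h ▸ List.prefix_append u' _) with h' | h'
        · exact hws.1.eq_of_isPrefix hws'.1 h'
        · exact (hws'.1.eq_of_isPrefix hws.1 h').symm
      subst huu'
      rw [ih hws.2 hws'.2 (List.append_cancel_left h)]

theorem weight_take_succ_ge (w : List Bool) (j : ℕ) :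
    weight k (w.take j) - 1 ≤ weight k (w.take (j + 1)) := by
  have h1 := neg_length_le_weight (k := k) ((w.drop j).take 1)
  have h2 : ((w.drop j).take 1).length ≤ 1 := by simp
  rw [List.take_add, weight_append]
  omega

theorem exists_isPrefix_isFirstPassage {w : List Bool} (hw : weight k w ≤ -1) :
    ∃ u, u <+: w ∧ IsFirstPassage k u := by
  classical
  have hex : ∃ j, weight k (w.take j) ≤ -1 := ⟨w.length, by simpa using hw⟩
  have hmin : ∀ i < Nat.find hex, 0 ≤ weight k (w.take i) := fun i hi => by
    have := Nat.find_min hex hi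
    omega
  have hpos : 0 < Nat.find hex := Nat.pos_of_ne_zero fun h => by
    simpa [h] using Nat.find_spec hex
  refine ⟨w.take (Nat.find hex), List.take_prefix _ w,
    isFirstPassage_iff_take.2 ⟨?_, fun i hi => ?_⟩⟩
  · have := weight_take_succ_ge (k := k) w (Nat.find hex - 1)
    rw [Nat.sub_add_cancel hpos] at this
    linarith [hmin _ (Nat.sub_lt hpos one_pos), Nat.find_spec hex]
  · rw [List.length_take] at hi
    rw [List.take_take, min_eq_left (by omega)]
    exact hmin i (by omega)

theorem exists_flatten_of_weight_eq_neg {m : ℕ} {w : List Bool} (hw : weight k w = -m)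
    (hpre : ∀ p, p <+: w → p ≠ w → -(m : ℤ) < weight k p) :
    ∃ ws : List (List Bool), ws.length = m ∧ (∀ u ∈ ws, IsFirstPassage k u) ∧
      w = ws.flatten := by
  induction m generalizing w with
  | zero =>
    refine ⟨[], rfl, by simp, by_contra fun hne => ?_⟩
    simpa using hpre [] (List.nil_prefix) (Ne.symm hne)
  | succ m ih =>
    obtain ⟨u, ⟨v, rfl⟩, hu⟩ :=
      exists_isPrefix_isFirstPassage (w := w) (by rw [hw]; push_cast; omega)
    rw [weight_append, hu.1] at hw
    have hv : ∀ p, p <+: v → p ≠ v → -(m : ℤ) < weight k p := fun p hp hne => by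
      have := hpre (u ++ p) ((List.prefix_append_right_inj u).2 hp)
        (fun h => hne (List.append_cancel_left h))
      rw [weight_append, hu.1] at this
      push_cast at this; linarith
    obtain ⟨ws, hlen, hws, rfl⟩ := ih (by push_cast at hw; linarith) hv
    exact ⟨u :: ws, by simp [hlen], List.forall_mem_cons.2 ⟨hu, hws⟩, rfl⟩

theorem IsFirstPassage.eq_false_or_exists_eq_cons_flatten {w : List Bool}
    (hw : IsFirstPassage k w) : w = [false] ∨ ∃ ws : List (List Bool), ws.length = k ∧
      (∀ u ∈ ws, IsFirstPassage k u) ∧ w = true :: ws.flatten := by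
  obtain ⟨hw, hpre⟩ := hw
  match w with
  | [] => simp at hw
  | false :: w' =>
    refine .inl (congrArg _ (by_contra fun hne => ?_))
    have := hpre [false] ⟨w', rfl⟩ (by simpa [eq_comm] using hne)
    simp at this
  | true :: w' =>
    have hw' : weight k w' = -k := by simp at hw; linarith
    obtain ⟨ws, hlen, hws, rfl⟩ := exists_flatten_of_weight_eq_neg hw' fun p hp hne => by
      have := hpre (true :: p) (List.cons_prefix_cons.2 ⟨rfl, hp⟩) (by simpa using hne)
      simp at this; linarith
    exact .inr ⟨ws, hlen, hws, rfl⟩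

theorem IsFirstPassage.eq_zero_of_rotate {w : List Bool} (hw : IsFirstPassage k w) {j : ℕ}
    (hj : j < w.length) (hrot : IsFirstPassage k (w.rotate j)) : j = 0 := by
  by_contra hne
  rw [isFirstPassage_iff_take] at hw hrot
  have htake := hw.2 j hj
  have hdrop := hrot.2 (w.length - j) (by simp; omega)
  rw [List.rotate_eq_drop_append_take hj.le, List.take_left' (by simp)] at hdrop
  have := weight_append (k := k) (w.take j) (w.drop j)
  rw [List.take_append_drop, hw.1] at this
  linarith

theorem weight_take_rotate {w : List Bool} {j L : ℕ} (hj : j ≤ w.length) (hL : L ≤ w.length) :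
    weight k ((w.rotate j).take L) =
      weight k ((w ++ w).take (j + L)) - weight k ((w ++ w).take j) := by
  rw [List.take_add, weight_append, add_sub_cancel_left, List.rotate_eq_drop_append_take hj,
    List.drop_append_of_le_length hj, List.take_append, List.take_append, List.take_take]
  congr 3
  simp only [List.length_drop]
  omega

theorem exists_isFirstPassage_rotate {w : List Bool} (hw : weight k w = -1) :
    ∃ j < w.length, IsFirstPassage k (w.rotate j) := by
  have hpos : 0 < w.length := List.length_pos_iff.2 fun h => by simp [h] at hw
  obtain ⟨j, hj, hle⟩ :=
    exists_forall_le_of_add_eq_sub_one (fun i => weight k ((w ++ w).take i)) w.length fun i hi => by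
      simp only [List.take_length_add_append, weight_append, hw, List.take_append_of_le_length hi]
      ring
  refine ⟨j % w.length, Nat.mod_lt _ hpos, ?_⟩
  rw [List.rotate_mod, isFirstPassage_iff_take, weight_perm (List.rotate_perm w j), hw]
  refine ⟨rfl, fun L hL => ?_⟩
  rw [List.length_rotate] at hL
  rw [weight_take_rotate hj hL.le]
  linarith [hle L hL]

theorem IsFirstPassage.length_eq {w : List Bool} (hw : IsFirstPassage k w) :
    w.length = k * w.count true + 1 := by
  have := hw.1
  simp only [weight] at this
  omega

theorem injOn_rotate :
    Set.InjOn (fun p : List Bool × ℕ => p.1.rotate p.2)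
      {p | IsFirstPassage k p.1 ∧ p.2 < p.1.length} := by
  suffices h : ∀ c₁ c₂ : List Bool, ∀ j₁ j₂ : ℕ, IsFirstPassage k c₁ → IsFirstPassage k c₂ →
      j₂ < c₂.length → j₁ ≤ j₂ → c₁.rotate j₁ = c₂.rotate j₂ → c₁ = c₂ ∧ j₁ = j₂ by
    rintro ⟨c₁, j₁⟩ ⟨hc₁, hj₁⟩ ⟨c₂, j₂⟩ ⟨hc₂, hj₂⟩ heq
    rcases le_total j₁ j₂ with hj | hj
    · obtain ⟨rfl, rfl⟩ := h c₁ c₂ j₁ j₂ hc₁ hc₂ hj₂ hj heq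
      rfl
    · obtain ⟨rfl, rfl⟩ := h c₂ c₁ j₂ j₁ hc₂ hc₁ hj₁ hj heq.symm
      rfl
  intro c₁ c₂ j₁ j₂ hc₁ hc₂ hj₂ hj heq
  rw [← Nat.sub_add_cancel hj, ← List.rotate_rotate, List.rotate_eq_rotate] at heq
  subst heq
  have := hc₂.eq_zero_of_rotate (by omega) hc₁
  exact ⟨by rw [this, List.rotate_zero], by omega⟩

end Weight

namespace KTree

def code : KTree → List Bool
  | .leaf => [false]
  | .node _ c => true :: (c.attach.map fun t => code t.1).flatten
decreasing_by
  have := List.sizeOf_lt_of_mem t.2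
  simp only [KTree.node.sizeOf_spec]
  omega

theorem code_leaf : code .leaf = [false] := by
  rw [code]

theorem code_node (x : ℕ) (c : List KTree) : code (.node x c) = true :: (c.map code).flatten := by
  rw [code, List.map_attach_eq_pmap, List.pmap_eq_map]

theorem count_true_code (t : KTree) : t.code.count true = t.labels.length := by
  induction t using induction_on with
  | leaf => simp [code_leaf, labels_leaf]
  | node x c ih =>
    simp only [code_node, labels_node, List.count_cons_self, List.length_cons, List.count_flatten,
      List.length_flatten, List.map_map]
    congr 2
    exact List.map_congr_left ih

theorem Arity.isFirstPassage_code {k : ℕ} {t : KTree} (h : t.Arity k) :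
    IsFirstPassage k t.code := by
  induction h with
  | leaf => exact code_leaf ▸ isFirstPassage_false
  | node x c hlen _ ih =>
    rw [code_node]
    exact .cons_flatten (by simpa using ih) (by simpa using hlen)

theorem eq_of_code_eq_of_labels_eq {k : ℕ} {t s : KTree} (ht : t.Arity k) (hs : s.Arity k)
    (hcode : t.code = s.code) (hlabels : t.labels = s.labels) : t = s := by
  induction t using induction_on generalizing s with
  | leaf =>
    cases s with
    | leaf => rfl
    | node y ss => simp [code_leaf, code_node] at hcode
  | node x ts ih =>
    cases s with
    | leaf => simp [code_leaf, code_node] at hcode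
    | node y ss =>
      cases ht with | node _ _ hts hts' =>
      cases hs with | node _ _ hss hss' =>
      rw [code_node, code_node, List.cons_inj_right] at hcode
      rw [labels_node, labels_node, List.cons.injEq] at hlabels
      have hcodes : ts.map code = ss.map code := eq_of_flatten_eq_flatten
        (by simpa using fun t ht => (hts' t ht).isFirstPassage_code)
        (by simpa using fun t ht => (hss' t ht).isFirstPassage_code) hcode
      have hlabelss : ts.map labels = ss.map labels := by
        refine List.eq_iff_flatten_eq.2 ⟨hlabels.2, ?_⟩
        have hlen (l : List KTree) :
            l.map (List.length ∘ labels) = (l.map code).map (List.count true) := by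
          simp [Function.comp_def, count_true_code]
        rw [List.map_map, List.map_map, hlen, hlen, hcodes]
      refine congrArg₂ _ hlabels.1 (List.ext_getElem (by rw [hts, hss]) fun i hic hid => ?_)
      have hi {α : Type} (f : KTree → α) (h : ts.map f = ss.map f) : f ts[i] = f ss[i] := by
        simpa [List.getElem?_eq_getElem hic, List.getElem?_eq_getElem hid] using congrArg (·[i]?) h
      exact ih _ (List.getElem_mem hic) (hts' _ (List.getElem_mem hic))
        (hss' _ (List.getElem_mem hid)) (hi code hcodes) (hi labels hlabelss)

theorem exists_map_code_eq {k : ℕ} {ws : List (List Bool)}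
    (h : ∀ u ∈ ws, ∀ m, ∃ t : KTree,
      t.Arity k ∧ t.code = u ∧ t.labels = List.range' m (u.count true))
    (m : ℕ) : ∃ ts : List KTree, (∀ t ∈ ts, t.Arity k) ∧ ts.map code = ws ∧
      (ts.map labels).flatten = List.range' m (ws.flatten.count true) := by
  induction ws generalizing m with
  | nil => exact ⟨[], by simp, rfl, rfl⟩
  | cons u ws ih =>
    simp only [List.forall_mem_cons] at h
    obtain ⟨t, ht, rfl, htl⟩ := h.1 m
    obtain ⟨ts, hts, rfl, htsl⟩ := ih h.2 (m + t.code.count true)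
    refine ⟨t :: ts, List.forall_mem_cons.2 ⟨ht, hts⟩, rfl, ?_⟩
    rw [List.map_cons, List.flatten_cons, htl, htsl, List.flatten_cons, List.count_append,
      List.range'_append_1]

theorem exists_code_eq_of_isFirstPassage {k : ℕ} {w : List Bool} (hw : IsFirstPassage k w)
    (m : ℕ) : ∃ t : KTree, t.Arity k ∧ t.code = w ∧ t.labels = List.range' m (w.count true) := by
  induction h : w.length using Nat.strong_induction_on generalizing w m with
  | _ n ih =>
    rcases hw.eq_false_or_exists_eq_cons_flatten with rfl | ⟨ws, hlen, hws, rfl⟩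
    · exact ⟨.leaf, .leaf, code_leaf, by simp [labels_leaf]⟩
    · have hsub : ∀ u ∈ ws, u.length < n := fun u hu => by
        have := (List.sublist_flatten_of_mem hu).length_le
        simp only [List.length_cons] at h
        omega
      obtain ⟨ts, hts, hcode, hlabels⟩ :=
        exists_map_code_eq (fun u hu m => ih _ (hsub u hu) (hws u hu) m rfl) (m + 1)
      refine ⟨.node m ts, .node m ts (by rw [← hlen, ← hcode, List.length_map]) hts,
        by rw [code_node, hcode], ?_⟩
      rw [labels_node, hlabels, List.count_cons_self, List.range'_succ]

end KTree

theorem ncard_length_count_eq_choose (N n : ℕ) :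
    {w : List Bool | w.length = N ∧ w.count true = n}.ncard = N.choose n := by
  induction N generalizing n with
  | zero =>
    cases n with
    | zero => exact Set.ncard_eq_one.2 ⟨[], by ext; simp +contextual [List.length_eq_zero_iff]⟩
    | succ n =>
      rw [Nat.choose_zero_succ,
        Set.ncard_eq_zero ((List.finite_length_eq Bool 0).subset fun _ hw => hw.1)]
      ext; simp +contextual [List.length_eq_zero_iff]
  | succ N ih =>
    have hfin (m : ℕ) : {w : List Bool | w.length = N ∧ w.count true = m}.Finite :=
      (List.finite_length_eq Bool N).subset fun _ hw => hw.1
    cases n with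
    | zero =>
      have : {w : List Bool | w.length = N + 1 ∧ w.count true = 0} =
          List.cons false '' {w | w.length = N ∧ w.count true = 0} := by
        ext (_ | ⟨_ | _, w⟩) <;> simp
      rw [this, Set.ncard_image_of_injective _ List.cons_injective, ih, Nat.choose_zero_right,
        Nat.choose_zero_right]
    | succ n =>
      have : {w : List Bool | w.length = N + 1 ∧ w.count true = n + 1} =
          List.cons true '' {w | w.length = N ∧ w.count true = n} ∪
          List.cons false '' {w | w.length = N ∧ w.count true = n + 1} := by
        ext (_ | ⟨_ | _, w⟩) <;> simp
      rw [this, Set.ncard_union_eq ?_ ((hfin _).image _) ((hfin _).image _),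
        Set.ncard_image_of_injective _ List.cons_injective,
        Set.ncard_image_of_injective _ List.cons_injective, ih, ih, Nat.choose_succ_succ]
      simp only [Set.disjoint_left, Set.mem_image]
      rintro _ ⟨_, -, rfl⟩ ⟨_, -, ⟨⟩⟩

theorem ncard_length_count_eq_mul (k n : ℕ) :
    {w : List Bool | w.length = k * n + 1 ∧ w.count true = n}.ncard =
      (k * n + 1) * {w : List Bool | IsFirstPassage k w ∧ w.count true = n}.ncard := by
  set F := {w : List Bool | IsFirstPassage k w ∧ w.count true = n}
  have himage : {w : List Bool | w.length = k * n + 1 ∧ w.count true = n} =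
      (fun p : List Bool × ℕ => p.1.rotate p.2) '' (F ×ˢ Set.Iio (k * n + 1)) := by
    ext w
    constructor
    · rintro ⟨hlen, hcount⟩
      obtain ⟨j, hj, hrot⟩ := exists_isFirstPassage_rotate (k := k) (w := w)
        (by simp only [weight]; push_cast [hlen, hcount]; ring)
      refine ⟨(w.rotate j, (w.length - j) % w.length), ⟨⟨hrot, ?_⟩, ?_⟩, ?_⟩
      · rw [(List.rotate_perm w j).count_eq, hcount]
      · rw [Set.mem_Iio, ← hlen]; exact Nat.mod_lt _ (by omega)
      · dsimp only
        rw [← List.length_rotate w j, List.rotate_mod, List.rotate_rotate, List.length_rotate,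
          Nat.add_sub_cancel' hj.le, List.rotate_length]
    · rintro ⟨⟨c, j⟩, ⟨⟨hc, hcount⟩, -⟩, rfl⟩
      exact ⟨by rw [List.length_rotate, hc.length_eq, hcount],
        by rw [(List.rotate_perm c j).count_eq, hcount]⟩
  have hinj : Set.InjOn (fun p : List Bool × ℕ => p.1.rotate p.2) (F ×ˢ Set.Iio (k * n + 1)) :=
    injOn_rotate.mono fun p ⟨⟨hc, hcount⟩, hj⟩ =>
      show IsFirstPassage k p.1 ∧ p.2 < p.1.length from
        ⟨hc, by rwa [Set.mem_Iio, ← hcount, ← hc.length_eq] at hj⟩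
  rw [himage, hinj.ncard_image, Set.ncard_prod, ← Finset.coe_range, Set.ncard_coe_finset,
    Finset.card_range, mul_comm]

theorem ncard_canonicalK_eq (k n : ℕ) :
    {t : KTree | IsLabeledKTree k n t ∧ t.CanonicalK}.ncard =
      {w : List Bool | IsFirstPassage k w ∧ w.count true = n}.ncard := by
  simp only [isLabeledKTree_and_canonicalK_iff]
  have hinj : Set.InjOn KTree.code {t : KTree | t.Arity k ∧ t.labels = List.range' 1 n} :=
    fun t ⟨ht, htl⟩ s ⟨hs, hsl⟩ hcode =>
      KTree.eq_of_code_eq_of_labels_eq ht hs hcode (htl.trans hsl.symm)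
  rw [← hinj.ncard_image]
  congr 1
  ext w
  constructor
  · rintro ⟨t, ⟨ht, htl⟩, rfl⟩
    exact ⟨ht.isFirstPassage_code, by rw [KTree.count_true_code, htl, List.length_range']⟩
  · rintro ⟨hw, hcount⟩
    obtain ⟨t, ht, rfl, htl⟩ := KTree.exists_code_eq_of_isFirstPassage hw 1
    exact ⟨t, ⟨ht, hcount ▸ htl⟩, rfl⟩

theorem canonicalKTree_card_general (k n : ℕ) :
    (k * n + 1) * {t : KTree | IsLabeledKTree k n t ∧ t.CanonicalK}.ncard
      = Nat.choose (k * n + 1) n := by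
  rw [ncard_canonicalK_eq, ← ncard_length_count_eq_mul, ncard_length_count_eq_choose]

/-- The number of canonical labeled `k`-ary trees with `n` nodes (equivalently, unlabeled
`k`-ary trees with `n` nodes) is the Fuss–Catalan number `(1/(kn+1)) C(kn+1, n)`. -/
theorem canonicalKTree_card (k n : ℕ) (hk : 1 ≤ k) :
    (k * n + 1) * {t : KTree | IsLabeledKTree k n t ∧ t.CanonicalK}.ncard
      = Nat.choose (k * n + 1) n :=
  canonicalKTree_card_general k n
end
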